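/- arXiv:2305.08331 — 4 statements merged into one kernel-verified Lean document; each statement's English description precedes it below -/
import Mathlib

section
/- Every 17-vertex C4-free Halin graph H satisfies e(H) ≤ 26. -/
open SimpleGraph

/-- Degree of a vertex as the `ncard` of its neighbour set. -/
noncomputable def ncDeg {V : Type*} (G : SimpleGraph V) (v : V) : ℕ :=
  (G.neighborSet v).ncard

/-- A leaf is a vertex of degree one. -/
def IsLeaf {V : Type*} (G : SimpleGraph V) (v : V) : Prop :=
  ncDeg G v = 1

/-- A Halin graph, presented by its characteristic tree `T` and outer cycle `C`.
The underlying graph is `T ⊔ C`.  The outer cycle is a `2`-regular connected graph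
whose support is exactly the set of leaves of `T`, every non-leaf of `T` has degree
at least three, and the cycle is compatible with a planar embedding: for every edge
`uv` of `T`, the leaves lying in each component of `T - uv` are consecutive on the
cycle, i.e. they induce a connected subgraph of the cycle. -/
structure HalinGraph (V : Type*) [Fintype V] : Type _ where
  /-- the characteristic tree -/
  T : SimpleGraph V
  /-- the outer cycle -/
  C : SimpleGraph V
  tree_isTree : T.IsTree
  four_le_card : 4 ≤ Fintype.card V
  nonleaf_degree : ∀ v : V, ¬ IsLeaf T v → 3 ≤ ncDeg T v
  support_C : C.support = {v : V | IsLeaf T v}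
  two_regular : ∀ v ∈ C.support, ncDeg C v = 2
  cycle_connected : (C.induce C.support).Connected
  planar : ∀ u v : V, T.Adj u v →
    (C.induce {x : V | IsLeaf T x ∧ (T.deleteEdges {s(u, v)}).Reachable u x}).Connected

/-- The Halin graph itself: the (edge-disjoint) union of the tree and the outer cycle. -/
def HalinGraph.graph {V : Type*} [Fintype V] (H : HalinGraph V) : SimpleGraph V :=
  H.T ⊔ H.C

/-- Number of edges of a graph. -/
noncomputable def eCount {V : Type*} (G : SimpleGraph V) : ℕ :=
  G.edgeSet.ncard

/-- A graph is `C₄`-free iff it contains no cycle of length `4`. -/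
def C4Free {V : Type*} (G : SimpleGraph V) : Prop :=
  ∀ (v : V) (w : G.Walk v v), w.IsCycle → w.length ≠ 4

/-- A semi-branching vertex of the characteristic tree: a non-leaf with at least one
leaf neighbour and at least two non-leaf neighbours. -/
def SemiBranching {V : Type*} (T : SimpleGraph V) (v : V) : Prop :=
  ¬ IsLeaf T v ∧ (∃ x, T.Adj v x ∧ IsLeaf T x) ∧
    ∃ x y : V, x ≠ y ∧ T.Adj v x ∧ T.Adj v y ∧ ¬ IsLeaf T x ∧ ¬ IsLeaf T y

/-!
A Halin graph on `n` vertices whose tree has `L` leaves has `(n - 1) + L` edges, so it suffices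
to show `3 L ≤ 2 (n - 1)`. Call a cycle edge `xy` a boundary edge if the tree neighbours `p x`,
`p y` of its ends differ. In a `C₄`-free Halin graph every leaf lies on a boundary edge (otherwise
`x`, its two cycle neighbours and their common tree neighbour span a `C₄`), and `p x`, `p y` are
not adjacent (else `p x, x, y, p y` is a `C₄`). Hence the tree path from `p x` to `p y` starts and
ends with two distinct internal edges (no leaf ends), each separating `x` from `y` in the tree.
Conversely, by planarity the leaves on either side of a tree edge form an arc of the cycle, so at
most two cycle edges cross it. Double counting ordered boundary pairs against the internal
edges separating them (at least two per pair, at most four per edge) gives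
`L ≤ #pairs ≤ 2 · #internal edges ≤ 2 (n - 1 - L)`, the last step because the internal edges and
the `L` pendant edges are disjoint sets of tree edges.
-/

open Finset

namespace SimpleGraph

variable {V : Type*} {G : SimpleGraph V}

theorem ncDeg_eq_degree (v : V) [Fintype (G.neighborSet v)] : ncDeg G v = G.degree v := by
  rw [ncDeg, ← Nat.card_coe_set_eq, Nat.card_eq_fintype_card, card_neighborSet_eq_degree]

theorem eCount_eq_card_edgeFinset [Fintype G.edgeSet] : eCount G = #G.edgeFinset := by
  rw [eCount, ← Nat.card_coe_set_eq, Nat.card_eq_fintype_card, edgeFinset_card]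

theorem C4Free.eq_of_square (h : C4Free G) {a b c d : V} (hab : G.Adj a b) (hbc : G.Adj b c)
    (hcd : G.Adj c d) (hda : G.Adj d a) (hbd : b ≠ d) : a = c := by
  by_contra hac
  refine h a (.cons hab (.cons hbc (.cons hcd (.cons hda .nil)))) ?_ rfl
  simp [Walk.isCycle_def, Walk.isTrail_def, hab.ne, hbc.ne, hcd.ne, hda.ne, hab.ne', hda.ne',
    hac, hbd, Ne.symm hac]

theorem Reachable.deleteEdges_reachable_or {u z : V} (h : G.Reachable z u) (v : V) :
    (G.deleteEdges {s(u, v)}).Reachable u z ∨ (G.deleteEdges {s(u, v)}).Reachable v z := by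
  obtain ⟨p⟩ := h
  induction p with
  | nil => exact .inl .rfl
  | @cons a b u hab p ih =>
    by_cases he : s(a, b) = s(u, v)
    · rcases Sym2.eq_iff.mp he with ⟨rfl, -⟩ | ⟨rfl, -⟩
      · exact .inl .rfl
      · exact .inr .rfl
    · have hadj : (G.deleteEdges {s(u, v)}).Adj a b := deleteEdges_adj.mpr ⟨hab, he⟩
      exact ih.imp (·.trans hadj.reachable.symm) (·.trans hadj.reachable.symm)

open Classical in
noncomputable def leafNeighbor (G : SimpleGraph V) (x : V) : V :=
  if h : ∃ y, G.Adj x y then h.choose else x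

end SimpleGraph

namespace IsLeaf

open SimpleGraph

variable {V : Type*} {G : SimpleGraph V} {x : V}

theorem eq_of_adj (hx : IsLeaf G x) {a b : V} (ha : G.Adj x a) (hb : G.Adj x b) : a = b := by
  obtain ⟨c, hc⟩ := Set.ncard_eq_one.mp hx
  have ha' : a ∈ G.neighborSet x := ha
  have hb' : b ∈ G.neighborSet x := hb
  rw [hc] at ha' hb'
  exact ha'.trans hb'.symm

theorem adj_leafNeighbor (hx : IsLeaf G x) : G.Adj x (G.leafNeighbor x) := by
  obtain ⟨c, hc⟩ := Set.ncard_eq_one.mp hx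
  have h : ∃ y, G.Adj x y := ⟨c, hc.ge rfl⟩
  rw [leafNeighbor, dif_pos h]
  exact h.choose_spec

theorem eq_leafNeighbor (hx : IsLeaf G x) {y : V} (h : G.Adj x y) : y = G.leafNeighbor x :=
  hx.eq_of_adj h hx.adj_leafNeighbor

theorem eq_of_isPath_cons {u w : V} {h : G.Adj u x} {q : G.Walk x w} (hx : IsLeaf G x)
    (hp : (Walk.cons h q).IsPath) : x = w := by
  cases q with
  | nil => rfl
  | cons h' q' =>
    have hu : u ∉ (Walk.cons h' q').support := (Walk.cons_isPath_iff _ _).mp hp |>.2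
    rw [hx.eq_of_adj h.symm h'] at hu
    exact absurd (Walk.support_cons _ _ ▸ List.mem_cons_of_mem _ q'.start_mem_support) hu

theorem not_isLeaf_leafNeighbor [Fintype V] (hG : G.Connected) (hV : 2 < Fintype.card V)
    (hx : IsLeaf G x) : ¬ IsLeaf G (G.leafNeighbor x) := by
  classical
  intro hp
  obtain ⟨w, -, hw⟩ := exists_mem_notMem_of_card_lt_card
    (s := {x, G.leafNeighbor x}) (t := univ) ((card_le_two).trans_lt hV)
  obtain ⟨p, hpath⟩ := (hG.preconnected x w).exists_isPath
  obtain ⟨y, hxy, q, rfl⟩ := Walk.exists_eq_cons_of_ne (by grind) p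
  obtain rfl := hx.eq_leafNeighbor hxy
  exact hw (by simp [hp.eq_of_isPath_cons hpath])

theorem reachable_leafNeighbor {e : Sym2 V} (hx : IsLeaf G x) (he : ∀ w ∈ e, ¬ IsLeaf G w) :
    (G.deleteEdges {e}).Reachable x (G.leafNeighbor x) :=
  (deleteEdges_adj.mpr ⟨hx.adj_leafNeighbor, fun (h : _ = e) =>
    he x (h ▸ Sym2.mem_mk_left _ _) hx⟩).reachable

theorem not_reachable_of_leafNeighbor {e : Sym2 V} {y : V} (hx : IsLeaf G x)
    (hy : IsLeaf G y) (he : ∀ w ∈ e, ¬ IsLeaf G w)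
    (h : ¬ (G.deleteEdges {e}).Reachable (G.leafNeighbor x) (G.leafNeighbor y)) :
    ¬ (G.deleteEdges {e}).Reachable x y := fun hxy =>
  h (((hx.reachable_leafNeighbor he).symm.trans hxy).trans (hy.reachable_leafNeighbor he))

end IsLeaf

namespace SimpleGraph

variable {V : Type*} {G : SimpleGraph V}

theorem IsTree.exists_adj_not_isLeaf_not_reachable (hG : G.IsTree) {a b : V} (hab : a ≠ b)
    (hb : ¬ IsLeaf G b) :
    ∃ z, G.Adj a z ∧ ¬ IsLeaf G z ∧ ¬ (G.deleteEdges {s(a, z)}).Reachable a b := by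
  obtain ⟨p, hp⟩ := (hG.connected.preconnected a b).exists_isPath
  obtain ⟨z, haz, q, rfl⟩ := Walk.exists_eq_cons_of_ne hab p
  refine ⟨z, haz, fun hz => hb (hz.eq_of_isPath_cons hp ▸ hz), fun hreach => ?_⟩
  have hq : s(a, z) ∉ q.edges := fun he =>
    ((Walk.cons_isPath_iff _ _).mp hp).2 (q.fst_mem_support_of_mem_edges he)
  exact isAcyclic_iff_forall_adj_isBridge.mp hG.isAcyclic haz
    (hreach.trans (q.toDeleteEdge _ hq).reachable.symm)

variable (G) in
open Classical in
noncomputable def leaves [Fintype V] : Finset V := {x | IsLeaf G x}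

variable (G) in
open Classical in
noncomputable def internalEdges [Fintype G.edgeSet] : Finset (Sym2 V) :=
  {e ∈ G.edgeFinset | ∀ w ∈ e, ¬ IsLeaf G w}

@[simp]
theorem mem_leaves [Fintype V] {x : V} : x ∈ G.leaves ↔ IsLeaf G x := by
  simp [leaves]

@[simp]
theorem mem_internalEdges [Fintype G.edgeSet] {e : Sym2 V} :
    e ∈ G.internalEdges ↔ e ∈ G.edgeSet ∧ ∀ w ∈ e, ¬ IsLeaf G w := by
  simp [internalEdges]

theorem card_internalEdges_add_card_leaves_le [Fintype V] [Fintype G.edgeSet]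
    (hG : G.Connected) (hV : 2 < Fintype.card V) :
    #G.internalEdges + #G.leaves ≤ #G.edgeFinset := by
  classical
  have hnonleaf {x : V} (hx : IsLeaf G x) := hx.not_isLeaf_leafNeighbor hG hV
  have hinj : Set.InjOn (fun x => s(x, G.leafNeighbor x)) G.leaves := by
    intro x hx y hy hxy
    rcases Sym2.eq_iff.mp hxy with ⟨h, -⟩ | ⟨-, h⟩
    · exact h
    · exact absurd (h ▸ mem_leaves.mp hy) (hnonleaf (mem_leaves.mp hx))
  have hdisj : Disjoint G.internalEdges (G.leaves.image fun x => s(x, G.leafNeighbor x)) := by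
    simp only [disjoint_right, mem_image, mem_leaves, mem_internalEdges]
    rintro _ ⟨x, hx, rfl⟩ ⟨-, h⟩
    exact h x (Sym2.mem_mk_left _ _) hx
  have hsub : G.internalEdges ∪ G.leaves.image (fun x => s(x, G.leafNeighbor x)) ⊆
      G.edgeFinset := by
    simp only [union_subset_iff, internalEdges, filter_subset, image_subset_iff, mem_leaves,
      mem_edgeFinset, mem_edgeSet, true_and]
    exact fun x hx => hx.adj_leafNeighbor
  rw [← card_image_of_injOn hinj, ← card_union_of_disjoint hdisj]
  exact card_le_card hsub

section Counting

variable [DecidableRel G.Adj]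

theorem card_interedges_self (S : Finset V) :
    #(G.interedges S S) = 2 * #(G.induce (S : Set V)).edgeFinset := by
  rw [← dart_card_eq_twice_card_edges, ← card_univ]
  symm
  refine card_bij (fun d _ => (d.fst.1, d.snd.1)) (fun d _ => ?_) (fun d _ d' _ h => ?_)
    (fun p hp => ?_)
  · simpa [mem_interedges_iff] using d.adj
  · simp only [Prod.mk.injEq] at h
    exact Dart.ext _ _ (Prod.ext (Subtype.ext h.1) (Subtype.ext h.2))
  · rw [mem_interedges_iff] at hp
    exact ⟨⟨(⟨p.1, hp.1⟩, ⟨p.2, hp.2.1⟩), hp.2.2⟩, mem_univ _, rfl⟩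

variable [Fintype V]

theorem card_edgeFinset_eq_card_support [DecidablePred (· ∈ G.support)]
    (h : ∀ v ∈ G.support, G.degree v = 2) : #G.edgeFinset = #{v | v ∈ G.support} := by
  have hsum : ∑ v, G.degree v = ∑ v with v ∈ G.support, 2 := by
    rw [sum_filter]
    refine sum_congr rfl fun v _ => ?_
    split_ifs with hv
    · exact h v hv
    · exact (G.degree_eq_zero_iff_notMem_support v).mpr hv
  rw [sum_degrees_eq_twice_card_edges, sum_const, smul_eq_mul] at hsum
  omega

theorem card_interedges_univ (S : Finset V) :
    #(G.interedges S univ) = ∑ v ∈ S, G.degree v := by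
  rw [interedges_def, card_filter, sum_product]
  refine sum_congr rfl fun v _ => ?_
  rw [← card_neighborFinset_eq_degree, neighborFinset_eq_filter, card_filter]

variable [DecidableEq V]

-- The degrees on `S` sum to at most `2 #S`, and the connected `G[S]` already uses `2 (#S - 1)`.
theorem card_interedges_compl_le_two {S : Finset V} (hdeg : ∀ v ∈ S, G.degree v ≤ 2)
    (hS : (G.induce (S : Set V)).Connected) : #(G.interedges S Sᶜ) ≤ 2 := by
  have hsplit : #(G.interedges S S) + #(G.interedges S Sᶜ) = #(G.interedges S univ) := by
    rw [← card_union_of_disjoint (G.interedges_disjoint_right _ disjoint_compl_right)]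
    congr 1
    ext p
    simp only [mem_union, mem_interedges_iff, mem_compl, mem_univ, true_and]
    tauto
  have hdegsum : ∑ v ∈ S, G.degree v ≤ 2 * #S := by
    simpa [mul_comm] using sum_le_sum hdeg
  have hconn : #S ≤ #(G.induce (S : Set V)).edgeFinset + 1 := by
    simpa [Nat.card_eq_fintype_card, edgeFinset_card] using
      hS.card_vert_le_card_edgeSet_add_one
  rw [card_interedges_self, card_interedges_univ] at hsplit
  omega

end Counting

end SimpleGraph

namespace HalinGraph

open SimpleGraph

open scoped Classical

variable {V : Type*} [Fintype V] (H : HalinGraph V)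

theorem mem_support_C {x : V} : x ∈ H.C.support ↔ IsLeaf H.T x := by
  rw [H.support_C]
  rfl

theorem isLeaf_of_adj {x y : V} (h : H.C.Adj x y) : IsLeaf H.T x :=
  H.mem_support_C.mp ⟨y, h⟩

theorem degree_C {x : V} (hx : IsLeaf H.T x) : H.C.degree x = 2 := by
  rw [← ncDeg_eq_degree]
  exact H.two_regular x (H.mem_support_C.mpr hx)

theorem two_lt_card (H : HalinGraph V) : 2 < Fintype.card V :=
  Nat.lt_of_lt_of_le (by norm_num) H.four_le_card

theorem not_isLeaf_leafNeighbor {x : V} (hx : IsLeaf H.T x) :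
    ¬ IsLeaf H.T (H.T.leafNeighbor x) :=
  hx.not_isLeaf_leafNeighbor H.tree_isTree.connected H.two_lt_card

theorem disjoint_edgeSet : Disjoint H.T.edgeSet H.C.edgeSet := by
  refine Set.disjoint_left.mpr fun e heT heC => ?_
  induction e using Sym2.ind with
  | _ a b =>
    have ha := H.isLeaf_of_adj heC
    exact H.not_isLeaf_leafNeighbor ha (ha.eq_leafNeighbor heT ▸ H.isLeaf_of_adj heC.symm)

theorem eCount_graph : eCount H.graph = Fintype.card V - 1 + #H.T.leaves := by
  have hT := H.tree_isTree.card_edgeFinset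
  have hC : #H.C.edgeFinset = #H.T.leaves := by
    rw [card_edgeFinset_eq_card_support fun v hv => H.degree_C (H.mem_support_C.mp hv)]
    simp [leaves, H.support_C]
  rw [HalinGraph.graph, eCount, edgeSet_sup, Set.ncard_union_eq H.disjoint_edgeSet,
    ← eCount, ← eCount, eCount_eq_card_edgeFinset, eCount_eq_card_edgeFinset, hC]
  omega

theorem exists_adj_leafNeighbor_ne (hfree : C4Free H.graph) {x : V} (hx : IsLeaf H.T x) :
    ∃ y, H.C.Adj x y ∧ H.T.leafNeighbor x ≠ H.T.leafNeighbor y := by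
  obtain ⟨p, n, hpn, hpn'⟩ := Set.ncard_eq_two.mp (H.two_regular x (H.mem_support_C.mpr hx))
  have hp : H.C.Adj x p := hpn'.ge (Set.mem_insert _ _)
  have hn : H.C.Adj x n := hpn'.ge (Set.mem_insert_of_mem _ rfl)
  by_contra! h
  have hTp := (H.isLeaf_of_adj hp.symm).adj_leafNeighbor
  have hTn := (H.isLeaf_of_adj hn.symm).adj_leafNeighbor
  rw [← h p hp] at hTp
  rw [← h n hn] at hTn
  exact hx.adj_leafNeighbor.ne' <| hfree.eq_of_square (Or.inl hTp.symm) (Or.inr hp.symm)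
    (Or.inr hn) (Or.inl hTn) hpn

theorem not_adj_leafNeighbor (hfree : C4Free H.graph) {x y : V} (hxy : H.C.Adj x y) :
    ¬ H.T.Adj (H.T.leafNeighbor x) (H.T.leafNeighbor y) := by
  intro h
  have hx := H.isLeaf_of_adj hxy
  have hy := H.isLeaf_of_adj hxy.symm
  have hne : x ≠ H.T.leafNeighbor y := fun he => H.not_isLeaf_leafNeighbor hy (he ▸ hx)
  have := hfree.eq_of_square (Or.inl hx.adj_leafNeighbor.symm) (Or.inr hxy)
    (Or.inl hy.adj_leafNeighbor) (Or.inl h.symm) hne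
  exact H.not_isLeaf_leafNeighbor hx (this ▸ hy)

noncomputable def boundaryPairs : Finset (V × V) :=
  {p | H.C.Adj p.1 p.2 ∧ H.T.leafNeighbor p.1 ≠ H.T.leafNeighbor p.2}

@[simp]
theorem mem_boundaryPairs {p : V × V} :
    p ∈ H.boundaryPairs ↔
      H.C.Adj p.1 p.2 ∧ H.T.leafNeighbor p.1 ≠ H.T.leafNeighbor p.2 := by
  simp [boundaryPairs]

theorem card_leaves_le_card_boundaryPairs (hfree : C4Free H.graph) :
    #H.T.leaves ≤ #H.boundaryPairs := by
  refine card_le_card_of_surjOn Prod.fst fun x hx => ?_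
  obtain ⟨y, hxy, hne⟩ := H.exists_adj_leafNeighbor_ne hfree (mem_leaves.mp hx)
  exact ⟨(x, y), H.mem_boundaryPairs.mpr ⟨hxy, hne⟩, rfl⟩

theorem two_le_card_separating (hfree : C4Free H.graph) {p : V × V}
    (hp : p ∈ H.boundaryPairs) :
    2 ≤ #{e ∈ H.T.internalEdges | ¬ (H.T.deleteEdges {e}).Reachable p.1 p.2} := by
  obtain ⟨x, y⟩ := p
  obtain ⟨hxy, hne⟩ := H.mem_boundaryPairs.mp hp
  have hx := H.isLeaf_of_adj hxy
  have hy := H.isLeaf_of_adj hxy.symm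
  obtain ⟨z, hz, hzl, hsep⟩ := H.tree_isTree.exists_adj_not_isLeaf_not_reachable hne
    (H.not_isLeaf_leafNeighbor hy)
  obtain ⟨z', hz', hzl', hsep'⟩ := H.tree_isTree.exists_adj_not_isLeaf_not_reachable hne.symm
    (H.not_isLeaf_leafNeighbor hx)
  have he : ∀ w ∈ s(H.T.leafNeighbor x, z), ¬ IsLeaf H.T w := by
    simp [H.not_isLeaf_leafNeighbor hx, hzl]
  have he' : ∀ w ∈ s(H.T.leafNeighbor y, z'), ¬ IsLeaf H.T w := by
    simp [H.not_isLeaf_leafNeighbor hy, hzl']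
  refine one_lt_card_iff.mpr ⟨s(H.T.leafNeighbor x, z), s(H.T.leafNeighbor y, z'), ?_, ?_, ?_⟩
  · simp only [mem_filter, mem_internalEdges, mem_edgeSet]
    exact ⟨⟨hz, he⟩, hx.not_reachable_of_leafNeighbor hy he hsep⟩
  · simp only [mem_filter, mem_internalEdges, mem_edgeSet]
    exact ⟨⟨hz', he'⟩, fun h => hy.not_reachable_of_leafNeighbor hx he' hsep' h.symm⟩
  · intro h
    rcases Sym2.eq_iff.mp h with ⟨h, -⟩ | ⟨-, rfl⟩
    · exact hne h
    · exact H.not_adj_leafNeighbor hfree hxy hz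

noncomputable def side (u v : V) : Finset V :=
  {x | IsLeaf H.T x ∧ (H.T.deleteEdges {s(u, v)}).Reachable u x}

@[simp]
theorem mem_side {u v x : V} :
    x ∈ H.side u v ↔ IsLeaf H.T x ∧ (H.T.deleteEdges {s(u, v)}).Reachable u x := by
  simp [side]

theorem card_interedges_side_le_two {u v : V} (huv : H.T.Adj u v) :
    #(H.C.interedges (H.side u v) (H.side u v)ᶜ) ≤ 2 := by
  refine card_interedges_compl_le_two (fun x hx => (H.degree_C (H.mem_side.mp hx).1).le) ?_
  have hside : (H.side u v : Set V) =
      {x | IsLeaf H.T x ∧ (H.T.deleteEdges {s(u, v)}).Reachable u x} := by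
    ext x
    simp
  exact hside ▸ H.planar u v huv

-- Each side of `uv` is an arc of the outer cycle, so at most two ordered pairs leave it.
theorem card_separated_le_four {u v : V} (huv : H.T.Adj u v) :
    #{p : V × V | H.C.Adj p.1 p.2 ∧ ¬ (H.T.deleteEdges {s(u, v)}).Reachable p.1 p.2} ≤ 4 := by
  have hvu : s(v, u) = s(u, v) := Sym2.eq_swap
  calc _ ≤ #(H.C.interedges (H.side u v) (H.side u v)ᶜ ∪
          H.C.interedges (H.side v u) (H.side v u)ᶜ) := by
        refine card_le_card fun ⟨x, y⟩ hp => ?_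
        obtain ⟨hxy, hsep⟩ := (mem_filter.mp hp).2
        have hx := H.isLeaf_of_adj hxy
        have hy := H.isLeaf_of_adj hxy.symm
        simp only [mem_union, mem_interedges_iff, mem_side, mem_compl, hvu, hx, hy, hxy,
          true_and, and_true]
        rcases (H.tree_isTree.connected.preconnected x u).deleteEdges_reachable_or v with h | h
        · exact .inl ⟨h, fun h' => hsep (h.symm.trans h')⟩
        · exact .inr ⟨h, fun h' => hsep (h.symm.trans h')⟩
    _ ≤ _ := card_union_le _ _
    _ ≤ 2 + 2 := add_le_add (H.card_interedges_side_le_two huv)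
        (H.card_interedges_side_le_two huv.symm)

theorem card_boundaryPairs_le (hfree : C4Free H.graph) :
    #H.boundaryPairs ≤ 2 * #H.T.internalEdges := by
  have := card_mul_le_card_mul (n := 4) (fun p e => ¬ (H.T.deleteEdges {e}).Reachable p.1 p.2)
    (fun p hp => H.two_le_card_separating hfree hp) (fun e he => ?_)
  · omega
  induction e using Sym2.ind with
  | _ u v =>
    refine (card_le_card fun p hp => ?_).trans
      (H.card_separated_le_four (mem_internalEdges.mp he).1)
    simp only [bipartiteBelow, mem_filter, mem_boundaryPairs, mem_univ, true_and] at hp ⊢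
    exact ⟨hp.1.1, hp.2⟩

theorem three_mul_card_leaves_le (hfree : C4Free H.graph) :
    3 * #H.T.leaves ≤ 2 * (Fintype.card V - 1) := by
  have h1 := H.card_leaves_le_card_boundaryPairs hfree
  have h2 := H.card_boundaryPairs_le hfree
  have h3 := card_internalEdges_add_card_leaves_le H.tree_isTree.connected H.two_lt_card
  have h4 := H.tree_isTree.card_edgeFinset
  omega

theorem three_mul_eCount_le (hfree : C4Free H.graph) :
    3 * eCount H.graph ≤ 5 * (Fintype.card V - 1) := by
  have := H.three_mul_card_leaves_le hfree
  rw [eCount_graph]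
  omega

end HalinGraph

/-- Every `17`-vertex `C₄`-free Halin graph has at most `26` edges. -/
theorem halin_seventeen {V : Type*} [Fintype V] (hcard : Fintype.card V = 17)
    (H : HalinGraph V) (hfree : C4Free H.graph) :
    eCount H.graph ≤ 26 := by
  have := H.three_mul_eCount_le hfree
  rw [hcard] at this
  omega
end

section
/- Let H be a 16-vertex C4-free Halin graph with characteristic tree T. Then every path in T has length at most 6. -/
open SimpleGraph

/-!
Let `v₀ v₁ … vₙ` be a path of the characteristic tree and let `Kᵢ` be the branch at `vᵢ`: the
vertices reachable from `vᵢ` without using an edge of the path. The branches are pairwise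
disjoint, and an inner branch has at least two vertices because `vᵢ` has degree at least three.
At either end of the path the first three branches have at least seven vertices together:
otherwise every neighbour of `v₁` other than `v₂`, and every neighbour of `v₂` off the path, is a
leaf. The leaves on the `v₂`-side of the edge `v₂v₃` are consecutive on the outer cycle, so going
along the cycle from a leaf at `v₂` to the leaf `v₀` at `v₁` one crosses an outer edge `AB` with
`A` a leaf at `v₂` and `B` a leaf at `v₁`, and `B v₁ v₂ A` is a 4-cycle. Hence `2n + 4 ≤ |V|`.
-/

section

variable {V : Type*} {G : SimpleGraph V}

lemma IsLeaf.eq_of_adj_s15 {x a b : V} (h : IsLeaf G x) (ha : G.Adj x a) (hb : G.Adj x b) :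
    a = b := by
  obtain ⟨c, hc⟩ := Set.ncard_eq_one.mp h
  have ha' : a ∈ G.neighborSet x := ha
  have hb' : b ∈ G.neighborSet x := hb
  rw [hc] at ha' hb'
  exact ha'.trans hb'.symm

lemma not_isLeaf_of_adj {x a b : V} (ha : G.Adj x a) (hb : G.Adj x b) (hab : a ≠ b) :
    ¬ IsLeaf G x :=
  fun h => hab (h.eq_of_adj_s15 ha hb)

lemma exists_adj_ne_ne {x : V} (h : 3 ≤ ncDeg G x) (a b : V) :
    ∃ u, G.Adj x u ∧ u ≠ a ∧ u ≠ b := by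
  by_contra! hsub
  have : ncDeg G x ≤ ({a, b} : Set V).ncard :=
    Set.ncard_le_ncard (fun u hu => or_iff_not_imp_left.mpr (hsub u hu)) (Set.toFinite _)
  have : ({a, b} : Set V).ncard ≤ 2 := (Set.ncard_insert_le a {b}).trans (by simp)
  omega

lemma not_c4Free_of_adj {a b c d : V} (hab : G.Adj a b) (hbc : G.Adj b c) (hcd : G.Adj c d)
    (hda : G.Adj d a) (hac : a ≠ c) (hbd : b ≠ d) : ¬ C4Free G := by
  intro hfree
  refine hfree a (.cons hab (.cons hbc (.cons hcd (.cons hda .nil)))) ?_ rfl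
  simp [Walk.cons_isCycle_iff, Walk.cons_isPath_iff, hab.ne, hbc.ne, hcd.ne, hda.ne, hac, hbd,
    hab.ne.symm, hda.ne.symm, hac.symm]

end

namespace SimpleGraph

variable {V : Type*} {G : SimpleGraph V}

lemma Reachable.mem_of_adj_mem {s : Set V} (hs : ∀ a b, a ∈ s → G.Adj a b → b ∈ s) {x y : V}
    (h : G.Reachable x y) (hx : x ∈ s) : y ∈ s := by
  by_contra hy
  obtain ⟨w⟩ := h
  obtain ⟨d, -, hd, hd'⟩ := w.exists_boundary_dart s hx hy
  exact hd' (hs _ _ hd d.adj)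

lemma adj_of_reachable_deleteEdges {x y z b : V} (hxy : G.Adj x y)
    (hxz : x ≠ z) (hx : ∀ u, G.Adj x u → u ≠ y → IsLeaf G u)
    (hy : ∀ u, G.Adj y u → u ≠ x → u ≠ z → IsLeaf G u)
    (h : (G.deleteEdges {s(y, z)}).Reachable y b) : G.Adj x b ∨ (G.Adj y b ∧ b ≠ z) := by
  refine h.mem_of_adj_mem (s := {b | G.Adj x b ∨ (G.Adj y b ∧ b ≠ z)}) ?_ (.inl hxy)
  rintro c d hc hcd
  rw [deleteEdges_adj, Set.mem_singleton_iff] at hcd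
  obtain ⟨hcd, hne⟩ := hcd
  rcases hc with hc | ⟨hc, hcz⟩
  · by_cases hcy : c = y
    · subst hcy
      exact .inr ⟨hcd, fun h => hne (by rw [h])⟩
    · obtain rfl := (hx c hc hcy).eq_of_adj_s15 hcd hc.symm
      exact .inr ⟨hxy.symm, hxz⟩
  · by_cases hcx : c = x
    · subst hcx
      exact .inl hcd
    · obtain rfl := (hy c hc hcx hcz).eq_of_adj_s15 hcd hc.symm
      exact .inl hxy

end SimpleGraph

namespace SimpleGraph.Walk

variable {V : Type*} {T : SimpleGraph V} {a b u : V} {i j : ℕ} {p : T.Walk a b}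

def branch (p : T.Walk a b) (i : ℕ) : Set V :=
  {x | (T.deleteEdges {e | e ∈ p.edges}).Reachable (p.getVert i) x}

lemma getVert_mem_branch (p : T.Walk a b) (i : ℕ) : p.getVert i ∈ p.branch i :=
  Reachable.refl _

lemma mem_branch_of_adj {x y : V} (hx : x ∈ p.branch i) (hxy : T.Adj x y)
    (he : s(x, y) ∉ p.edges) : y ∈ p.branch i :=
  hx.trans (Adj.reachable (by rw [deleteEdges_adj]; exact ⟨hxy, he⟩))

lemma branch_reverse (p : T.Walk a b) (i : ℕ) :
    p.reverse.branch i = p.branch (p.length - i) := by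
  simp [branch, getVert_reverse, edges_reverse]

lemma IsPath.eq_getVert_of_mk_mem_edges (hp : p.IsPath) (hi : i ≤ p.length)
    (h : s(p.getVert i, u) ∈ p.edges) : u = p.getVert (i - 1) ∨ u = p.getVert (i + 1) := by
  obtain ⟨k, hk, he⟩ := p.mk_mem_edges_iff_exists.mp h
  have inj := hp.getVert_injOn
  rcases Sym2.eq_iff.mp he with ⟨h1, h2⟩ | ⟨h1, h2⟩
  · obtain rfl : k = i := inj (by simp; omega) (by simpa) h1
    exact .inr h2.symm
  · obtain rfl : k + 1 = i := inj (by simp; omega) (by simpa) h2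
    exact .inl h1.symm

lemma IsPath.mem_branch_of_adj_getVert (hp : p.IsPath) (hi : i ≤ p.length)
    (hu : T.Adj (p.getVert i) u) (h₁ : u ≠ p.getVert (i - 1)) (h₂ : u ≠ p.getVert (i + 1)) :
    u ∈ p.branch i :=
  Walk.mem_branch_of_adj (p.getVert_mem_branch i) hu
    fun h => (hp.eq_getVert_of_mk_mem_edges hi h).elim h₁ h₂

lemma IsPath.disjoint_branch (hT : T.IsAcyclic) (hp : p.IsPath) (hij : i < j)
    (hj : j ≤ p.length) : Disjoint (p.branch i) (p.branch j) := by
  set e := s(p.getVert i, p.getVert (i + 1))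
  have he : e = p.edges[i]'(by simp; omega) := (getElem_edges _).symm
  have hbridge := isBridge_iff.mp
    (isAcyclic_iff_forall_adj_isBridge.mp hT (p.adj_getVert_succ (hij.trans_le hj)))
  rw [Set.disjoint_left]
  intro x hxi hxj
  -- Both a walk from `vᵢ` to `vⱼ` through `x` and the rest of `p` from `vᵢ₊₁` avoid the bridge `e`.
  have h₁ : (T.deleteEdges {e}).Reachable (p.getVert i) (p.getVert j) :=
    (hxi.trans hxj.symm).mono (deleteEdges_anti (by simp [he]))
  have h₂ : (T.deleteEdges {e}).Reachable (p.getVert (i + 1)) (p.getVert j) := by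
    rw [reachable_deleteEdges_iff_exists_walk]
    refine ⟨((p.drop (i + 1)).take (j - (i + 1))).copy rfl
      (by rw [drop_getVert]; congr 1; omega), fun hmem => ?_⟩
    rw [edges_copy, edges_take, edges_drop] at hmem
    obtain ⟨k, hk, hk'⟩ := List.mem_drop_iff_getElem.mp (List.mem_of_mem_take hmem)
    have := (hp.isTrail.edges_nodup.getElem_inj_iff).mp (hk'.trans he)
    omega
  exact hbridge (h₁.trans h₂.symm)

lemma IsPath.disjoint_branch_of_ne (hT : T.IsAcyclic) (hp : p.IsPath) (hi : i ≤ p.length)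
    (hj : j ≤ p.length) (hij : i ≠ j) : Disjoint (p.branch i) (p.branch j) := by
  rcases hij.lt_or_gt with h | h
  · exact hp.disjoint_branch hT h hj
  · exact (hp.disjoint_branch hT h hi).symm

lemma IsPath.sum_ncard_branch_le [Finite V] (hT : T.IsAcyclic) (hp : p.IsPath) :
    ∑ k ∈ Finset.range (p.length + 1), (p.branch k).ncard ≤ Nat.card V := by
  rw [← finsum_mem_coe_finset, ← (Finset.finite_toSet _).ncard_biUnion
    (fun _ _ => Set.toFinite _) ?_, ← Set.ncard_univ]
  · exact Set.ncard_le_ncard (Set.subset_univ _)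
  intro k hk l hl hkl
  simp only [Finset.coe_range, Set.mem_Iio] at hk hl
  exact hp.disjoint_branch_of_ne hT (by omega) (by omega) hkl

lemma IsPath.eq_of_getVert_mem_branch (hT : T.IsAcyclic) (hp : p.IsPath) (hi : i ≤ p.length)
    (hj : j ≤ p.length) (h : p.getVert j ∈ p.branch i) : j = i :=
  by_contra fun hji => Set.disjoint_left.mp (hp.disjoint_branch_of_ne hT hi hj (Ne.symm hji)) h
    (p.getVert_mem_branch j)

lemma IsPath.notMem_support_of_mem_branch (hT : T.IsAcyclic) (hp : p.IsPath) (hi : i ≤ p.length)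
    {x : V} (hx : x ∈ p.branch i) (hxi : x ≠ p.getVert i) : x ∉ p.support := by
  intro hs
  obtain ⟨j, rfl, hj⟩ := mem_support_iff_exists_getVert.mp hs
  exact hxi (by rw [hp.eq_of_getVert_mem_branch hT hi hj hx])

section Finite

variable [Finite V]

lemma one_le_ncard_branch (p : T.Walk a b) (i : ℕ) : 1 ≤ (p.branch i).ncard :=
  (Set.ncard_pos (Set.toFinite _)).mpr ⟨_, p.getVert_mem_branch i⟩

lemma IsPath.two_le_ncard_branch (hdeg : ∀ v, ¬ IsLeaf T v → 3 ≤ ncDeg T v) (hp : p.IsPath)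
    (hi₀ : 0 < i) (hi : i < p.length) :
    2 ≤ (p.branch i).ncard := by
  have hprev : T.Adj (p.getVert i) (p.getVert (i - 1)) := by
    simpa [Nat.sub_add_cancel hi₀] using (p.adj_getVert_succ (i := i - 1) (by omega)).symm
  have hne : p.getVert (i - 1) ≠ p.getVert (i + 1) := fun h => by
    have := hp.getVert_injOn (by simp; omega) (by simp; omega) h
    omega
  obtain ⟨u, hu, hu₁, hu₂⟩ := exists_adj_ne_ne
    (hdeg _ (not_isLeaf_of_adj hprev (p.adj_getVert_succ hi) hne)) _ _
  rw [← Set.ncard_pair hu.ne]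
  refine Set.ncard_le_ncard (Set.pair_subset (p.getVert_mem_branch i) ?_) (Set.toFinite _)
  exact hp.mem_branch_of_adj_getVert hi.le hu hu₁ hu₂

lemma IsPath.three_le_ncard_branch_zero (hdeg : ∀ v, ¬ IsLeaf T v → 3 ≤ ncDeg T v)
    (hp : p.IsPath) (ha : ¬ IsLeaf T a) : 3 ≤ (p.branch 0).ncard := by
  obtain ⟨u₁, hu₁, hu₁', -⟩ := exists_adj_ne_ne (hdeg a ha) (p.getVert 1) (p.getVert 1)
  obtain ⟨u₂, hu₂, hu₂', hu₁₂⟩ := exists_adj_ne_ne (hdeg a ha) (p.getVert 1) u₁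
  have hmem {u : V} (hu : T.Adj a u) (hu' : u ≠ p.getVert 1) : u ∈ p.branch 0 :=
    hp.mem_branch_of_adj_getVert (Nat.zero_le _) (by simpa using hu) (by simpa using hu.ne') hu'
  rw [← Set.ncard_eq_three.mpr ⟨a, u₁, u₂, hu₁.ne, hu₂.ne, hu₁₂.symm, rfl⟩]
  refine Set.ncard_le_ncard (Set.insert_subset ?_ (Set.pair_subset (hmem hu₁ hu₁')
    (hmem hu₂ hu₂'))) (Set.toFinite _)
  simpa using p.getVert_mem_branch 0

lemma IsPath.four_le_ncard_branch (hdeg : ∀ v, ¬ IsLeaf T v → 3 ≤ ncDeg T v) (hT : T.IsAcyclic)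
    (hp : p.IsPath) (hi : i ≤ p.length)
    (hu : T.Adj (p.getVert i) u) (h₁ : u ≠ p.getVert (i - 1)) (h₂ : u ≠ p.getVert (i + 1))
    (hu' : ¬ IsLeaf T u) : 4 ≤ (p.branch i).ncard := by
  have hub : u ∈ p.branch i := hp.mem_branch_of_adj_getVert hi hu h₁ h₂
  have hus : u ∉ p.support := hp.notMem_support_of_mem_branch hT hi hub hu.ne'
  have hsub : insert u (T.neighborSet u) ⊆ p.branch i := Set.insert_subset hub
    fun y hy => mem_branch_of_adj hub hy fun he => hus (p.fst_mem_support_of_mem_edges he)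
  calc 4 ≤ ncDeg T u + 1 := by have := hdeg u hu'; omega
    _ = (insert u (T.neighborSet u)).ncard :=
      (Set.ncard_insert_of_notMem (fun h => h.ne rfl) (Set.toFinite _)).symm
    _ ≤ (p.branch i).ncard := Set.ncard_le_ncard hsub (Set.toFinite _)

lemma IsPath.seven_le_ncard_branch_of_adj_one (hdeg : ∀ v, ¬ IsLeaf T v → 3 ≤ ncDeg T v)
    (hT : T.IsAcyclic) (hp : p.IsPath) (hlen : 3 ≤ p.length) (hu : T.Adj (p.getVert 1) u)
    (hu₂ : u ≠ p.getVert 2) (hu' : ¬ IsLeaf T u) :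
    7 ≤ (p.branch 0).ncard + (p.branch 1).ncard + (p.branch 2).ncard := by
  have h₂ := hp.two_le_ncard_branch hdeg (i := 2) (by omega) (by omega)
  by_cases hu₀ : u = p.getVert 0
  · have := hp.three_le_ncard_branch_zero hdeg (by rwa [hu₀, getVert_zero] at hu')
    have := hp.two_le_ncard_branch hdeg (i := 1) (by omega) (by omega)
    omega
  · have := hp.four_le_ncard_branch hdeg hT (i := 1) (by omega) hu hu₀ hu₂ hu'
    have := one_le_ncard_branch p 0
    omega

lemma IsPath.seven_le_ncard_branch_of_adj_two (hdeg : ∀ v, ¬ IsLeaf T v → 3 ≤ ncDeg T v)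
    (hT : T.IsAcyclic) (hp : p.IsPath) (hlen : 3 ≤ p.length) (hu : T.Adj (p.getVert 2) u)
    (hu₁ : u ≠ p.getVert 1) (hu₃ : u ≠ p.getVert 3) (hu' : ¬ IsLeaf T u) :
    7 ≤ (p.branch 0).ncard + (p.branch 1).ncard + (p.branch 2).ncard := by
  have := hp.four_le_ncard_branch hdeg hT (i := 2) (by omega) hu hu₁ hu₃ hu'
  have := hp.two_le_ncard_branch hdeg (i := 1) (by omega) (by omega)
  have := one_le_ncard_branch p 0
  omega

end Finite

end SimpleGraph.Walk

lemma two_mul_add_four_le_sum_range {f : ℕ → ℕ} {n : ℕ} (hn : 5 ≤ n)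
    (hmid : ∀ i, 0 < i → i < n → 2 ≤ f i) (hstart : 7 ≤ f 0 + f 1 + f 2)
    (hend : 7 ≤ f (n - 2) + f (n - 1) + f n) : 2 * n + 4 ≤ ∑ i ∈ Finset.range (n + 1), f i := by
  obtain ⟨m, rfl⟩ := Nat.exists_eq_add_of_le' hn
  have hm : 2 * m ≤ ∑ i ∈ Finset.range m, f (3 + i) := by
    simpa [mul_comm] using Finset.card_nsmul_le_sum (Finset.range m) _ 2
      fun i hi => hmid _ (by omega) (by simp at hi; omega)
  rw [show m + 5 - 2 = 3 + m + 0 by omega, show m + 5 - 1 = 3 + m + 1 by omega,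
    show m + 5 = 3 + m + 2 by omega] at hend
  rw [show m + 5 + 1 = 3 + m + 3 by ring, Finset.sum_range_add, Finset.sum_range_add]
  simp only [Finset.sum_range_succ, Finset.sum_range_zero]
  omega


namespace HalinGraph

open SimpleGraph Walk

variable {V : Type*} [Fintype V] (H : HalinGraph V)

theorem not_c4Free_of_forall_isLeaf {w x y z : V} (hwx : H.T.Adj w x) (hxy : H.T.Adj x y)
    (hyz : H.T.Adj y z) (hwy : w ≠ y) (hxz : x ≠ z)
    (hx : ∀ u, H.T.Adj x u → u ≠ y → IsLeaf H.T u)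
    (hy : ∀ u, H.T.Adj y u → u ≠ x → u ≠ z → IsLeaf H.T u) : ¬ C4Free H.graph := by
  have hxl : ¬ IsLeaf H.T x := not_isLeaf_of_adj hwx.symm hxy hwy
  have hyl : ¬ IsLeaf H.T y := not_isLeaf_of_adj hxy.symm hyz hxz
  have hwl : IsLeaf H.T w := hx w hwx.symm hwy
  obtain ⟨u, hyu, hux, huz⟩ := exists_adj_ne_ne (H.nonleaf_degree y hyl) x z
  have hu : (H.T.deleteEdges {s(y, z)}).Adj y u :=
    deleteEdges_adj.mpr ⟨hyu, fun h => huz (Sym2.congr_right.mp h)⟩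
  have hw : (H.T.deleteEdges {s(y, z)}).Reachable y w := by
    refine (Adj.reachable (v := x) ?_).trans (Adj.reachable ?_)
    · exact deleteEdges_adj.mpr ⟨hxy.symm, fun h => hxz (Sym2.congr_right.mp h)⟩
    · refine deleteEdges_adj.mpr ⟨hwx.symm, fun h => ?_⟩
      rcases Sym2.eq_iff.mp h with ⟨h, -⟩ | ⟨h, -⟩
      exacts [hxy.ne h, hxz h]
  have hyw : ¬ H.T.Adj y w := fun h => hxy.ne (hwl.eq_of_adj_s15 hwx h.symm)
  obtain ⟨q⟩ := (H.planar y z hyz).preconnected ⟨u, hy u hyu hux huz, hu.reachable⟩ ⟨w, hwl, hw⟩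
  obtain ⟨⟨⟨A, B⟩, hAB⟩, -, hyA, hyB⟩ := q.exists_boundary_dart {v | H.T.Adj y v} hyu hyw
  have hxB : H.T.Adj x B := (adj_of_reachable_deleteEdges hxy hxz hx hy B.2.2).resolve_right
    fun h => hyB h.1
  exact not_c4Free_of_adj (G := H.graph) (.inl hxB.symm) (.inl hxy) (.inl hyA) (.inr hAB)
    (fun h => hyl (h ▸ B.2.1)) (fun h => hxl (h ▸ A.2.1))

theorem seven_le_ncard_branch (hfree : C4Free H.graph) {a b : V} {p : H.T.Walk a b}
    (hp : p.IsPath) (hlen : 3 ≤ p.length) :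
    7 ≤ (p.branch 0).ncard + (p.branch 1).ncard + (p.branch 2).ncard := by
  have hT := H.tree_isTree.isAcyclic
  have hinj {i j : ℕ} (hi : i ≤ 3) (hj : j ≤ 3) (hij : i ≠ j) : p.getVert i ≠ p.getVert j :=
    fun h => hij (hp.getVert_injOn (by simp; omega) (by simp; omega) h)
  by_contra! hlt
  refine H.not_c4Free_of_forall_isLeaf (p.adj_getVert_succ (i := 0) (by omega))
    (p.adj_getVert_succ (i := 1) (by omega)) (p.adj_getVert_succ (i := 2) (by omega))
    (hinj (by omega) (by omega) (by omega)) (hinj (by omega) (by omega) (by omega)) ?_ ?_ hfree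
  · intro u hu hu₂
    by_contra hu'
    exact hlt.not_ge (hp.seven_le_ncard_branch_of_adj_one H.nonleaf_degree hT hlen hu hu₂ hu')
  · intro u hu hu₁ hu₃
    by_contra hu'
    exact hlt.not_ge
      (hp.seven_le_ncard_branch_of_adj_two H.nonleaf_degree hT hlen hu hu₁ hu₃ hu')

theorem two_mul_length_add_four_le_card (hfree : C4Free H.graph) {a b : V} {p : H.T.Walk a b}
    (hp : p.IsPath) (hlen : 5 ≤ p.length) : 2 * p.length + 4 ≤ Fintype.card V := by
  have hstart := H.seven_le_ncard_branch hfree hp (by omega)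
  have hend := H.seven_le_ncard_branch hfree hp.reverse (by simp; omega)
  simp only [branch_reverse, Nat.sub_zero] at hend
  rw [← Nat.card_eq_fintype_card]
  exact (two_mul_add_four_le_sum_range hlen
    (fun i h₀ hi => hp.two_le_ncard_branch H.nonleaf_degree h₀ hi) hstart (by omega)).trans
    (hp.sum_ncard_branch_le H.tree_isTree.isAcyclic)

end HalinGraph

/-- In a `16`-vertex `C₄`-free Halin graph, every path of the characteristic tree has
length at most `6`. -/
theorem halin_sixteen_path_le_six {V : Type*} [Fintype V]
    (hcard : Fintype.card V = 16) (H : HalinGraph V) (hfree : C4Free H.graph) :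
    ∀ (a b : V) (p : H.T.Walk a b), p.IsPath → p.length ≤ 6 := by
  intro a b p hp
  by_contra! hlen
  have := H.two_mul_length_add_four_le_card hfree hp (by omega)
  omega
end

section
/- Let H be a 16-vertex C4-free Halin graph with characteristic tree T. If the longest path in T has length exactly 6, then e(H) = 24. -/
open SimpleGraph

section Helpers

variable {V : Type*} {T : SimpleGraph V}

lemma leaf_nbr_eq {x u z : V} (hx : IsLeaf T x) (hu : T.Adj x u) (hz : T.Adj x z) : z = u := by
  obtain ⟨w, hw⟩ := Set.ncard_eq_one.mp hx
  have h1 : u ∈ T.neighborSet x := hu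
  have h2 : z ∈ T.neighborSet x := hz
  rw [hw] at h1 h2
  simp at h1 h2; exact h2.trans h1.symm

lemma two_adj_not_leaf [Finite V] {v x y : V} (hx : T.Adj v x) (hy : T.Adj v y) (hxy : x ≠ y) :
    ¬ IsLeaf T v := fun hv => hxy (leaf_nbr_eq hv hy hx)

lemma exists_nbr_ne2 [Finite V] {v : V} (h3 : 3 ≤ ncDeg T v) (a b : V) :
    ∃ z, T.Adj v z ∧ z ≠ a ∧ z ≠ b := by
  have hfin : (T.neighborSet v).Finite := Set.toFinite _
  have hne : (T.neighborSet v \ {a, b}).Nonempty := by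
    rw [Set.nonempty_iff_ne_empty]
    intro h
    have hsub : T.neighborSet v ⊆ {a, b} := by
      intro z hz
      by_contra hzz
      exact absurd h (Set.nonempty_iff_ne_empty.mp ⟨z, hz, hzz⟩)
    have := Set.ncard_le_ncard hsub (Set.toFinite _)
    have h2 : ({a, b} : Set V).ncard ≤ 2 := by
      apply le_trans (Set.ncard_insert_le _ _); simp
    unfold ncDeg at h3; omega
  obtain ⟨z, hz, hzz⟩ := hne
  simp only [Set.mem_insert_iff, Set.mem_singleton_iff, not_or] at hzz
  exact ⟨z, hz, hzz.1, hzz.2⟩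

lemma exists_nbr_ne [Finite V] {v : V} (h3 : 3 ≤ ncDeg T v) (a : V) :
    ∃ z, T.Adj v z ∧ z ≠ a := by
  obtain ⟨z, hz, h1, _⟩ := exists_nbr_ne2 h3 a a; exact ⟨z, hz, h1⟩

lemma no_chord (hac : T.IsAcyclic) {x y : V} (hadj : T.Adj x y) (q : T.Walk x y)
    (hq : q.IsPath) : q.length = 1 := by
  have h := hac.path_unique ⟨q, hq⟩ (SimpleGraph.Path.singleton hadj)
  have h2 : q = (SimpleGraph.Path.singleton hadj).1 := congrArg Subtype.val h
  rw [h2]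
  simp [SimpleGraph.Path.singleton]

lemma chord2 (hac : T.IsAcyclic) {x0 x1 x2 : V} (h01 : T.Adj x0 x1) (h12 : T.Adj x1 x2)
    (hn : ([x0, x1, x2] : List V).Nodup) : ¬ T.Adj x0 x2 := by
  intro h
  have hp : (SimpleGraph.Walk.cons h01 (SimpleGraph.Walk.cons h12 SimpleGraph.Walk.nil)).IsPath := by
    rw [SimpleGraph.Walk.isPath_def]; simpa using hn
  have := no_chord hac h _ hp; simp at this

lemma chord3 (hac : T.IsAcyclic) {x0 x1 x2 x3 : V} (h01 : T.Adj x0 x1) (h12 : T.Adj x1 x2)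
    (h23 : T.Adj x2 x3) (hn : ([x0, x1, x2, x3] : List V).Nodup) : ¬ T.Adj x0 x3 := by
  intro h
  have hp : (SimpleGraph.Walk.cons h01 (SimpleGraph.Walk.cons h12
      (SimpleGraph.Walk.cons h23 SimpleGraph.Walk.nil))).IsPath := by
    rw [SimpleGraph.Walk.isPath_def]; simpa using hn
  have := no_chord hac h _ hp; simp at this

lemma chord4 (hac : T.IsAcyclic) {x0 x1 x2 x3 x4 : V} (h01 : T.Adj x0 x1) (h12 : T.Adj x1 x2)
    (h23 : T.Adj x2 x3) (h34 : T.Adj x3 x4)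
    (hn : ([x0, x1, x2, x3, x4] : List V).Nodup) : ¬ T.Adj x0 x4 := by
  intro h
  have hp : (SimpleGraph.Walk.cons h01 (SimpleGraph.Walk.cons h12
      (SimpleGraph.Walk.cons h23 (SimpleGraph.Walk.cons h34 SimpleGraph.Walk.nil)))).IsPath := by
    rw [SimpleGraph.Walk.isPath_def]; simpa using hn
  have := no_chord hac h _ hp; simp at this

lemma chord5 (hac : T.IsAcyclic) {x0 x1 x2 x3 x4 x5 : V} (h01 : T.Adj x0 x1) (h12 : T.Adj x1 x2)
    (h23 : T.Adj x2 x3) (h34 : T.Adj x3 x4) (h45 : T.Adj x4 x5)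
    (hn : ([x0, x1, x2, x3, x4, x5] : List V).Nodup) : ¬ T.Adj x0 x5 := by
  intro h
  have hp : (SimpleGraph.Walk.cons h01 (SimpleGraph.Walk.cons h12
      (SimpleGraph.Walk.cons h23 (SimpleGraph.Walk.cons h34
      (SimpleGraph.Walk.cons h45 SimpleGraph.Walk.nil))))).IsPath := by
    rw [SimpleGraph.Walk.isPath_def]; simpa using hn
  have := no_chord hac h _ hp; simp at this

lemma chord6 (hac : T.IsAcyclic) {x0 x1 x2 x3 x4 x5 x6 : V} (h01 : T.Adj x0 x1)
    (h12 : T.Adj x1 x2) (h23 : T.Adj x2 x3) (h34 : T.Adj x3 x4) (h45 : T.Adj x4 x5)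
    (h56 : T.Adj x5 x6)
    (hn : ([x0, x1, x2, x3, x4, x5, x6] : List V).Nodup) : ¬ T.Adj x0 x6 := by
  intro h
  have hp : (SimpleGraph.Walk.cons h01 (SimpleGraph.Walk.cons h12
      (SimpleGraph.Walk.cons h23 (SimpleGraph.Walk.cons h34
      (SimpleGraph.Walk.cons h45 (SimpleGraph.Walk.cons h56 SimpleGraph.Walk.nil)))))).IsPath := by
    rw [SimpleGraph.Walk.isPath_def]; simpa using hn
  have := no_chord hac h _ hp; simp at this

lemma toolong (hmax : ∀ (x y : V) (p : T.Walk x y), p.IsPath → p.length ≤ 6)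
    {x0 x1 x2 x3 x4 x5 x6 x7 : V} (h01 : T.Adj x0 x1) (h12 : T.Adj x1 x2) (h23 : T.Adj x2 x3)
    (h34 : T.Adj x3 x4) (h45 : T.Adj x4 x5) (h56 : T.Adj x5 x6) (h67 : T.Adj x6 x7)
    (hn : ([x0, x1, x2, x3, x4, x5, x6, x7] : List V).Nodup) : False := by
  have hp : (SimpleGraph.Walk.cons h01 (SimpleGraph.Walk.cons h12
      (SimpleGraph.Walk.cons h23 (SimpleGraph.Walk.cons h34
      (SimpleGraph.Walk.cons h45 (SimpleGraph.Walk.cons h56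
      (SimpleGraph.Walk.cons h67 SimpleGraph.Walk.nil))))))).IsPath := by
    rw [SimpleGraph.Walk.isPath_def]; simpa using hn
  have := hmax _ _ _ hp
  simp at this

lemma ncDeg_eq_degree {V : Type*} [Fintype V] (G : SimpleGraph V) [DecidableRel G.Adj] (v : V) :
    ncDeg G v = G.degree v := by
  rw [ncDeg, Set.ncard_eq_toFinset_card' (G.neighborSet v), SimpleGraph.degree,
    SimpleGraph.neighborFinset]

lemma eCount_eq {V : Type*} [Fintype V] (G : SimpleGraph V) [DecidableRel G.Adj] :
    eCount G = G.edgeFinset.card := by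
  rw [eCount, Set.ncard_eq_toFinset_card' G.edgeSet, SimpleGraph.edgeFinset]

lemma handshake_partition {V : Type*} [Fintype V] (G : SimpleGraph V)
    (hdeg : ∀ v : V, ¬ IsLeaf G v → 3 ≤ ncDeg G v) :
    {x : V | IsLeaf G x}.ncard + 3 * {x : V | ¬ IsLeaf G x}.ncard ≤ 2 * eCount G ∧
    {x : V | IsLeaf G x}.ncard + {x : V | ¬ IsLeaf G x}.ncard = Fintype.card V := by
  classical
  have hsum := G.sum_degrees_eq_twice_card_edges
  have hL : {x : V | IsLeaf G x}.ncard = (Finset.univ.filter (fun x => IsLeaf G x)).card := by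
    rw [Set.ncard_eq_toFinset_card']; congr 1; ext x; simp
  have hI : {x : V | ¬ IsLeaf G x}.ncard =
      (Finset.univ.filter (fun x => ¬ IsLeaf G x)).card := by
    rw [Set.ncard_eq_toFinset_card']; congr 1; ext x; simp
  refine ⟨?_, by rw [hL, hI]; exact Finset.card_filter_add_card_filter_not _⟩
  have he : eCount G = G.edgeFinset.card := eCount_eq G
  rw [hL, hI, he, ← hsum,
    ← Finset.sum_filter_add_sum_filter_not Finset.univ (fun x => IsLeaf G x)
      (fun x => G.degree x)]
  have e1 : ∀ x ∈ Finset.univ.filter (fun x => IsLeaf G x), G.degree x = 1 := by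
    intro x hx
    rw [← ncDeg_eq_degree]
    exact (Finset.mem_filter.mp hx).2
  have h1 : ∑ x ∈ Finset.univ.filter (fun x => IsLeaf G x), G.degree x
      = (Finset.univ.filter (fun x => IsLeaf G x)).card := by
    rw [Finset.sum_congr rfl e1]; simp
  have h2 : (Finset.univ.filter (fun x => ¬ IsLeaf G x)).card • 3 ≤
      ∑ x ∈ Finset.univ.filter (fun x => ¬ IsLeaf G x), G.degree x := by
    apply Finset.card_nsmul_le_sum
    intro x hx
    rw [← ncDeg_eq_degree]
    exact hdeg x (Finset.mem_filter.mp hx).2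
  simp only [smul_eq_mul] at h2
  omega

lemma cycle_ecount {V : Type*} [Fintype V] (C : SimpleGraph V)
    (h2 : ∀ v ∈ C.support, ncDeg C v = 2) : eCount C = C.support.ncard := by
  classical
  have hsum := C.sum_degrees_eq_twice_card_edges
  have hS : C.support.ncard = (Finset.univ.filter (fun x => x ∈ C.support)).card := by
    rw [Set.ncard_eq_toFinset_card']; congr 1; ext x; simp
  have hsplit := Finset.sum_filter_add_sum_filter_not Finset.univ
    (fun x => x ∈ C.support) (fun x => C.degree x)
  have e1 : ∀ x ∈ Finset.univ.filter (fun x => x ∈ C.support), C.degree x = 2 := by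
    intro x hx
    rw [← ncDeg_eq_degree]
    exact h2 x (Finset.mem_filter.mp hx).2
  have e0 : ∀ x ∈ Finset.univ.filter (fun x => ¬ x ∈ C.support), C.degree x = 0 := by
    intro x hx
    have hx0 := (Finset.mem_filter.mp hx).2
    rw [SimpleGraph.mem_support] at hx0
    push_neg at hx0
    rw [SimpleGraph.degree]
    apply Finset.card_eq_zero.mpr
    ext y
    simp only [SimpleGraph.mem_neighborFinset, Finset.notMem_empty, iff_false]
    exact hx0 y
  rw [Finset.sum_congr rfl e1, Finset.sum_congr rfl e0] at hsplit
  simp only [Finset.sum_const, smul_eq_mul, Finset.sum_const, mul_zero, add_zero] at hsplit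
  rw [eCount_eq, hS]
  omega

lemma sym2_ne {V : Type*} {a b c d : V} (h : ¬(a = c ∧ b = d)) (h2 : ¬(a = d ∧ b = c)) :
    s(a,b) ≠ s(c,d) := by simp only [Ne, Sym2.eq_iff]; tauto

set_option maxHeartbeats 1000000 in
lemma config {V : Type*} [Fintype V] (H : HalinGraph V) (hfree : C4Free H.graph)
    {u v p : V} (huv : H.T.Adj u v) (hup : H.T.Adj u p) (hvp : v ≠ p)
    (hv : ¬ IsLeaf H.T v) (hp : ¬ IsLeaf H.T p)
    (hvn : ∀ z, H.T.Adj v z → z = u ∨ IsLeaf H.T z)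
    (hun : ∀ z, H.T.Adj u z → z = v ∨ z = p ∨ IsLeaf H.T z) : False := by
  have hu : ¬ IsLeaf H.T u := two_adj_not_leaf huv hup hvp
  have hunev : u ≠ v := huv.ne
  have hunep : u ≠ p := hup.ne
  have hadjG' : ∀ {a b : V}, H.T.Adj a b → s(a,b) ≠ s(u,p) →
      (H.T.deleteEdges {s(u,p)}).Adj a b := by
    intro a b hab hne
    rw [SimpleGraph.deleteEdges_adj]
    exact ⟨hab, by simpa using hne⟩
  -- star walk characterization
  have starwalk : ∀ {z c : V} (_ : (H.T.deleteEdges {s(u,p)}).Walk z c), c = u →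
      z = u ∨ z = v ∨ (IsLeaf H.T z ∧ (H.T.Adj u z ∨ H.T.Adj v z)) := by
    intro z c w
    induction w with
    | nil => intro h; exact Or.inl h
    | cons h w ih =>
      intro hc
      rename_i zz yy cc
      rcases ih hc with hy | hy | ⟨hyl, hy⟩
      · rw [hy] at h
        have hTz : H.T.Adj u zz := ((SimpleGraph.deleteEdges_adj).mp h).1.symm
        have hznp : zz ≠ p := by
          intro hzp
          have h5 := ((SimpleGraph.deleteEdges_adj).mp h).2
          rw [hzp] at h5
          simp [Sym2.eq_swap] at h5
        rcases hun zz hTz with h1 | h1 | h1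
        · exact Or.inr (Or.inl h1)
        · exact absurd h1 hznp
        · exact Or.inr (Or.inr ⟨h1, Or.inl hTz⟩)
      · rw [hy] at h
        have hTz : H.T.Adj v zz := ((SimpleGraph.deleteEdges_adj).mp h).1.symm
        rcases hvn zz hTz with h1 | h1
        · exact Or.inl h1
        · exact Or.inr (Or.inr ⟨h1, Or.inr hTz⟩)
      · have hTz : H.T.Adj yy zz := ((SimpleGraph.deleteEdges_adj).mp h).1.symm
        rcases hy with hy | hy
        · exact Or.inl (leaf_nbr_eq hyl hy.symm hTz)
        · exact Or.inr (Or.inl (leaf_nbr_eq hyl hy.symm hTz))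
  have hBconn := H.planar u p hup
  set B : Set V := {x : V | IsLeaf H.T x ∧ (H.T.deleteEdges {s(u, p)}).Reachable u x} with hBdef
  set A : Set V := {x : V | IsLeaf H.T x ∧ H.T.Adj v x} with hAdef
  have hne_uv_up : s(u,v) ≠ s(u,p) :=
    sym2_ne (fun hh => hvp hh.2) (fun hh => hunep hh.1)
  have hA_B : A ⊆ B := by
    rintro x ⟨hxl, hvx⟩
    refine ⟨hxl, ?_⟩
    have h1 : (H.T.deleteEdges {s(u,p)}).Adj u v := hadjG' huv hne_uv_up
    have h2 : (H.T.deleteEdges {s(u,p)}).Adj v x :=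
      hadjG' hvx (sym2_ne (fun hh => hunev hh.1.symm) (fun hh => hvp hh.1))
    exact h1.reachable.trans h2.reachable
  -- the leaf neighbour t of u
  obtain ⟨t, hut, htv, htp⟩ := exists_nbr_ne2 (H.nonleaf_degree u hu) v p
  have htl : IsLeaf H.T t := by
    rcases hun t hut with h | h | h
    · exact absurd h htv
    · exact absurd h htp
    · exact h
  have ht_B : t ∈ B := by
    refine ⟨htl, ?_⟩
    exact (hadjG' hut (sym2_ne (fun hh => htp hh.2) (fun hh => hunep hh.1))).reachable
  have ht_nA : t ∉ A := by
    rintro ⟨-, hvt⟩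
    exact hunev (leaf_nbr_eq htl hut.symm hvt.symm).symm
  -- a leaf neighbour of v, giving a point of A
  obtain ⟨x0, hvx0, hx0u⟩ := exists_nbr_ne (H.nonleaf_degree v hv) u
  have hx0l : IsLeaf H.T x0 := by
    rcases hvn x0 hvx0 with h | h
    · exact absurd h hx0u
    · exact h
  have hx0A : x0 ∈ A := ⟨hx0l, hvx0⟩
  -- crossing dart
  obtain ⟨W⟩ := hBconn.preconnected ⟨x0, hA_B hx0A⟩ ⟨t, ht_B⟩
  obtain ⟨d, _, hdf, hds⟩ := W.exists_boundary_dart {z : ↥B | (z : V) ∈ A}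
    (by exact hx0A) (by exact ht_nA)
  have hCxy : H.C.Adj (d.fst : V) (d.snd : V) := d.adj
  set x : V := (d.fst : V)
  set y : V := (d.snd : V)
  have hxA : x ∈ A := hdf
  have hyB : y ∈ B := d.snd.2
  have hynA : y ∉ A := hds
  -- y is a leaf adjacent to u
  have huy : H.T.Adj u y := by
    obtain ⟨W2⟩ := hyB.2
    rcases starwalk W2.reverse rfl with h | h | ⟨hyl, h | h⟩
    · rw [h] at hyB; exact absurd hyB.1 hu
    · rw [h] at hyB; exact absurd hyB.1 hv
    · exact h
    · exact absurd ⟨hyl, h⟩ hynA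
  have hvx : H.T.Adj v x := hxA.2
  -- distinctness
  have hxl : IsLeaf H.T x := hxA.1
  have hyl : IsLeaf H.T y := hyB.1
  have hxy : x ≠ y := hCxy.ne
  have hvnex : v ≠ x := fun h => hv (h ▸ hxl)
  have hvney : v ≠ y := fun h => hv (h ▸ hyl)
  have hunex : u ≠ x := fun h => hu (h ▸ hxl)
  have huney : u ≠ y := fun h => hu (h ▸ hyl)
  -- the 4-cycle
  have hg1 : H.graph.Adj v x := by
    show (H.T ⊔ H.C).Adj v x
    exact Or.inl hvx
  have hg2 : H.graph.Adj x y := by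
    show (H.T ⊔ H.C).Adj x y
    exact Or.inr hCxy
  have hg3 : H.graph.Adj y u := by
    show (H.T ⊔ H.C).Adj y u
    exact Or.inl huy.symm
  have hg4 : H.graph.Adj u v := by
    show (H.T ⊔ H.C).Adj u v
    exact Or.inl huv
  refine hfree v (SimpleGraph.Walk.cons hg1 (SimpleGraph.Walk.cons hg2
    (SimpleGraph.Walk.cons hg3 (SimpleGraph.Walk.cons hg4 SimpleGraph.Walk.nil)))) ?_ (by rfl)
  constructor
  · constructor
    · constructor
      simp only [SimpleGraph.Walk.edges_cons, SimpleGraph.Walk.edges_nil,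
        List.nodup_cons, List.mem_cons, List.not_mem_nil, List.nodup_nil]
      simp only [Sym2.eq_iff]
      tauto
    · simp
  · simp only [SimpleGraph.Walk.support_cons, SimpleGraph.Walk.support_nil, List.tail_cons,
      List.nodup_cons, List.mem_cons, List.not_mem_nil, List.nodup_nil]
    push_neg
    tauto

lemma end_leaf [Finite V] (hac : T.IsAcyclic) (hdeg : ∀ v : V, ¬ IsLeaf T v → 3 ≤ ncDeg T v)
    (hmax : ∀ (x y : V) (p : T.Walk x y), p.IsPath → p.length ≤ 6)
    {a v1 v2 v3 v4 v5 b : V} (h01 : T.Adj a v1) (h12 : T.Adj v1 v2) (h23 : T.Adj v2 v3)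
    (h34 : T.Adj v3 v4) (h45 : T.Adj v4 v5) (h5b : T.Adj v5 b)
    (hn : ([a, v1, v2, v3, v4, v5, b] : List V).Nodup) : IsLeaf T a := by
  simp only [List.nodup_cons, List.mem_cons, List.not_mem_nil, List.mem_singleton,
    List.nodup_nil, not_or, and_true] at hn
  obtain ⟨⟨ha1, ha2, ha3, ha4, ha5, hab⟩, ⟨h1v2, h1v3, h1v4, h1v5, h1b⟩,
    ⟨h2v3, h2v4, h2v5, h2b⟩, ⟨h3v4, h3v5, h3b⟩, ⟨h4v5, h4b⟩, h5bne⟩ := hn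
  by_contra hleaf
  obtain ⟨z, haz, hz1⟩ := exists_nbr_ne (hdeg a hleaf) v1
  have hza : z ≠ a := haz.ne'
  have hz2 : z ≠ v2 := fun h => chord2 hac h01 h12 (by simp [*]) (h ▸ haz)
  have hz3 : z ≠ v3 := fun h => chord3 hac h01 h12 h23 (by simp [*]) (h ▸ haz)
  have hz4 : z ≠ v4 := fun h => chord4 hac h01 h12 h23 h34 (by simp [*]) (h ▸ haz)
  have hz5 : z ≠ v5 := fun h => chord5 hac h01 h12 h23 h34 h45 (by simp [*]) (h ▸ haz)
  have hzb : z ≠ b := fun h => chord6 hac h01 h12 h23 h34 h45 h5b (by simp [*]) (h ▸ haz)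
  exact toolong hmax haz.symm h01 h12 h23 h34 h45 h5b (by simp [*])

lemma v1_nbrs [Finite V] (hac : T.IsAcyclic) (hdeg : ∀ v : V, ¬ IsLeaf T v → 3 ≤ ncDeg T v)
    (hmax : ∀ (x y : V) (p : T.Walk x y), p.IsPath → p.length ≤ 6)
    {a v1 v2 v3 v4 v5 b : V} (h01 : T.Adj a v1) (h12 : T.Adj v1 v2) (h23 : T.Adj v2 v3)
    (h34 : T.Adj v3 v4) (h45 : T.Adj v4 v5) (h5b : T.Adj v5 b)
    (hn : ([a, v1, v2, v3, v4, v5, b] : List V).Nodup) :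
    ∀ z, T.Adj v1 z → z = v2 ∨ IsLeaf T z := by
  classical
  have hla : IsLeaf T a := end_leaf hac hdeg hmax h01 h12 h23 h34 h45 h5b hn
  have hlb : IsLeaf T b := by
    refine end_leaf hac hdeg hmax h5b.symm h45.symm h34.symm h23.symm h12.symm h01.symm ?_
    simp only [List.nodup_cons, List.mem_cons, List.not_mem_nil, List.mem_singleton,
      List.nodup_nil, not_or, and_true] at hn ⊢
    tauto
  simp only [List.nodup_cons, List.mem_cons, List.not_mem_nil, List.mem_singleton,
    List.nodup_nil, not_or, and_true] at hn
  obtain ⟨⟨ha1, ha2, ha3, ha4, ha5, hab⟩, ⟨h1v2, h1v3, h1v4, h1v5, h1b⟩,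
    ⟨h2v3, h2v4, h2v5, h2b⟩, ⟨h3v4, h3v5, h3b⟩, ⟨h4v5, h4b⟩, h5bne⟩ := hn
  intro z h1z
  by_cases hlz : IsLeaf T z
  · exact Or.inr hlz
  refine Or.inl ?_
  by_contra hz2
  exfalso
  have hz1 : z ≠ v1 := h1z.ne'
  have hza : z ≠ a := fun h => hlz (h ▸ hla)
  have hzb : z ≠ b := fun h => hlz (h ▸ hlb)
  have hz3 : z ≠ v3 := fun h => chord2 hac h12 h23 (by simp [*]) (h ▸ h1z)
  have hz4 : z ≠ v4 := fun h => chord3 hac h12 h23 h34 (by simp [*]) (h ▸ h1z)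
  have hz5 : z ≠ v5 := fun h => chord4 hac h12 h23 h34 h45 (by simp [*]) (h ▸ h1z)
  -- z is internal, so has a neighbour y ≠ v1
  obtain ⟨y, hzy, hy1⟩ := exists_nbr_ne (hdeg z hlz) v1
  have hyz : y ≠ z := hzy.ne'
  have hya : y ≠ a := by
    intro h
    have : z = v1 := leaf_nbr_eq hla h01 (h ▸ hzy).symm
    exact hz1 this
  have hyb : y ≠ b := by
    intro h
    have : z = v5 := leaf_nbr_eq hlb h5b.symm (h ▸ hzy).symm
    exact hz5 this
  have hy2 : y ≠ v2 := fun h => chord2 hac h1z.symm h12 (by simp [*]) (h ▸ hzy)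
  have hy3 : y ≠ v3 := fun h => chord3 hac h1z.symm h12 h23 (by simp [*]) (h ▸ hzy)
  have hy4 : y ≠ v4 := fun h => chord4 hac h1z.symm h12 h23 h34 (by simp [*]) (h ▸ hzy)
  have hy5 : y ≠ v5 := fun h => chord5 hac h1z.symm h12 h23 h34 h45 (by simp [*]) (h ▸ hzy)
  exact toolong hmax hzy.symm h1z.symm h12 h23 h34 h45 h5b (by simp [*])

end Helpers

lemma seven_le {V : Type*} [Fintype V] (H : HalinGraph V) (hfree : C4Free H.graph)
    (hex : ∃ (a b : V) (p : H.T.Walk a b), p.IsPath ∧ p.length = 6)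
    (hmax : ∀ (a b : V) (p : H.T.Walk a b), p.IsPath → p.length ≤ 6) :
    7 ≤ {x : V | ¬ IsLeaf H.T x}.ncard := by
  classical
  have hac : H.T.IsAcyclic := H.tree_isTree.IsAcyclic
  have hdeg := H.nonleaf_degree
  obtain ⟨a, b, p, hp, hlen⟩ := hex
  cases p with
  | nil => simp at hlen
  | cons h1 p =>
  cases p with
  | nil => simp at hlen
  | cons h2 p =>
  cases p with
  | nil => simp at hlen
  | cons h3 p =>
  cases p with
  | nil => simp at hlen
  | cons h4 p =>
  cases p with
  | nil => simp at hlen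
  | cons h5 p =>
  cases p with
  | nil => simp at hlen
  | cons h6 p =>
  cases p with
  | cons h7 p => simp [SimpleGraph.Walk.length_cons] at hlen
  | nil =>
  rename_i w1 w2 w3 w4 w5
  clear hlen
  have hnd : ([a, w1, w2, w3, w4, w5, b] : List V).Nodup := by
    have := hp.support_nodup
    simpa using this
  have hn := hnd
  simp only [List.nodup_cons, List.mem_cons, List.not_mem_nil, List.mem_singleton,
    List.nodup_nil, not_or, not_false_eq_true, and_true] at hn
  obtain ⟨⟨ha1, ha2, ha3, ha4, ha5, hab⟩, ⟨h1v2, h1v3, h1v4, h1v5, h1b⟩,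
    ⟨h2v3, h2v4, h2v5, h2b⟩, ⟨h3v4, h3v5, h3b⟩, ⟨h4v5, h4b⟩, h5bne⟩ := hn
  have sym_ha1 : w1 ≠ a := Ne.symm ha1
  have sym_ha2 : w2 ≠ a := Ne.symm ha2
  have sym_ha3 : w3 ≠ a := Ne.symm ha3
  have sym_ha4 : w4 ≠ a := Ne.symm ha4
  have sym_ha5 : w5 ≠ a := Ne.symm ha5
  have sym_hab : b ≠ a := Ne.symm hab
  have sym_h1v2 : w2 ≠ w1 := Ne.symm h1v2
  have sym_h1v3 : w3 ≠ w1 := Ne.symm h1v3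
  have sym_h1v4 : w4 ≠ w1 := Ne.symm h1v4
  have sym_h1v5 : w5 ≠ w1 := Ne.symm h1v5
  have sym_h1b : b ≠ w1 := Ne.symm h1b
  have sym_h2v3 : w3 ≠ w2 := Ne.symm h2v3
  have sym_h2v4 : w4 ≠ w2 := Ne.symm h2v4
  have sym_h2v5 : w5 ≠ w2 := Ne.symm h2v5
  have sym_h2b : b ≠ w2 := Ne.symm h2b
  have sym_h3v4 : w4 ≠ w3 := Ne.symm h3v4
  have sym_h3v5 : w5 ≠ w3 := Ne.symm h3v5
  have sym_h3b : b ≠ w3 := Ne.symm h3b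
  have sym_h4v5 : w5 ≠ w4 := Ne.symm h4v5
  have sym_h4b : b ≠ w4 := Ne.symm h4b
  have sym_h5bne : b ≠ w5 := Ne.symm h5bne
  have hnd' : ([b, w5, w4, w3, w2, w1, a] : List V).Nodup := by simp [*]
  have hi1 : ¬ IsLeaf H.T w1 := two_adj_not_leaf h1.symm h2 ha2
  have hi2 : ¬ IsLeaf H.T w2 := two_adj_not_leaf h2.symm h3 h1v3
  have hi3 : ¬ IsLeaf H.T w3 := two_adj_not_leaf h3.symm h4 h2v4
  have hi4 : ¬ IsLeaf H.T w4 := two_adj_not_leaf h4.symm h5 h3v5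
  have hi5 : ¬ IsLeaf H.T w5 := two_adj_not_leaf h5.symm h6 h4b
  by_contra hlt
  push_neg at hlt
  have hv1n := v1_nbrs hac hdeg hmax h1 h2 h3 h4 h5 h6 hnd
  have hv5n := v1_nbrs hac hdeg hmax h6.symm h5.symm h4.symm h3.symm h2.symm h1.symm hnd'
  by_cases hcase : ∀ z, H.T.Adj w2 z → z = w1 ∨ z = w3 ∨ IsLeaf H.T z
  · exact config H hfree h2.symm h3 h1v3 hi1 hi3 hv1n hcase
  by_cases hcase' : ∀ z, H.T.Adj w4 z → z = w5 ∨ z = w3 ∨ IsLeaf H.T z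
  · exact config H hfree h5 h4.symm (fun h => h3v5 h.symm) hi5 hi3 hv5n hcase'
  push_neg at hcase hcase'
  obtain ⟨w, h2w, hw1, hw3, hwl⟩ := hcase
  obtain ⟨w', h4w', hw'5, hw'3, hw'l⟩ := hcase'
  have hw2 : w ≠ w2 := h2w.ne'
  have hw4 : w ≠ w4 := fun h => chord2 hac h3 h4 (by simp [*]) (h ▸ h2w)
  have hw5 : w ≠ w5 := fun h => chord3 hac h3 h4 h5 (by simp [*]) (h ▸ h2w)
  have hw'4 : w' ≠ w4 := h4w'.ne'
  have hw'2 : w' ≠ w2 := fun h => chord2 hac h3 h4 (by simp [*]) ((h ▸ h4w').symm)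
  have hw'1 : w' ≠ w1 := fun h => chord3 hac h2 h3 h4 (by simp [*]) ((h ▸ h4w').symm)
  by_cases hww : w = w'
  · exact chord3 hac h2w.symm h3 h4 (by simp [*]) ((hww ▸ h4w').symm)
  · have h1w : w1 ≠ w := fun h => hw1 h.symm
    have h2w'' : w2 ≠ w := fun h => hw2 h.symm
    have h3w : w3 ≠ w := fun h => hw3 h.symm
    have h4w'' : w4 ≠ w := fun h => hw4 h.symm
    have h5w : w5 ≠ w := fun h => hw5 h.symm
    have h1w' : w1 ≠ w' := fun h => hw'1 h.symm
    have h2w''' : w2 ≠ w' := fun h => hw'2 h.symm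
    have h3w' : w3 ≠ w' := fun h => hw'3 h.symm
    have h4w''' : w4 ≠ w' := fun h => hw'4 h.symm
    have h5w' : w5 ≠ w' := fun h => hw'5 h.symm
    have hsub : ({w1, w2, w3, w4, w5, w, w'} : Set V) ⊆ {x : V | ¬ IsLeaf H.T x} := by
      intro x hx
      simp only [Set.mem_insert_iff, Set.mem_singleton_iff] at hx
      rcases hx with rfl|rfl|rfl|rfl|rfl|rfl|rfl <;> assumption
    have h7 : ({w1, w2, w3, w4, w5, w, w'} : Set V).ncard = 7 := by
      rw [Set.ncard_insert_of_notMem (by simp [*]),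
        Set.ncard_insert_of_notMem (by simp [*]),
        Set.ncard_insert_of_notMem (by simp [*]),
        Set.ncard_insert_of_notMem (by simp [*]),
        Set.ncard_insert_of_notMem (by simp [*]),
        Set.ncard_insert_of_notMem (by simp [*]), Set.ncard_singleton]
    have hle := Set.ncard_le_ncard hsub (Set.toFinite _)
    omega

lemma no_leaf_adj {V : Type*} [Fintype V] (H : HalinGraph V) {x y : V}
    (hx : IsLeaf H.T x) (hy : IsLeaf H.T y) (hxy : H.T.Adj x y) : False := by
  classical
  have hcard := H.four_le_card
  have hz : ∃ z : V, z ≠ x ∧ z ≠ y := by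
    have hsub : ({x, y} : Finset V) ⊆ Finset.univ := Finset.subset_univ _
    have h1 : (Finset.univ \ ({x, y} : Finset V)).card =
        Fintype.card V - ({x, y} : Finset V).card := by
      rw [Finset.card_sdiff_of_subset hsub]; rfl
    have h2 : ({x, y} : Finset V).card ≤ 2 := Finset.card_insert_le _ _ |>.trans (by simp)
    have h3 : 0 < (Finset.univ \ ({x, y} : Finset V)).card := by omega
    obtain ⟨z, hz⟩ := Finset.card_pos.mp h3
    simp only [Finset.mem_sdiff, Finset.mem_insert, Finset.mem_singleton, not_or] at hz
    exact ⟨z, hz.2.1, hz.2.2⟩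
  obtain ⟨z, hzx, hzy⟩ := hz
  have stays : ∀ {c e : V} (_ : H.T.Walk c e), e = x → c = x ∨ c = y := by
    intro c e w
    induction w with
    | nil => exact fun h => Or.inl h
    | cons h w ih =>
      intro he
      rcases ih he with h' | h'
      · rw [h'] at h
        exact Or.inr (leaf_nbr_eq hx hxy h.symm)
      · rw [h'] at h
        exact Or.inl (leaf_nbr_eq hy hxy.symm h.symm)
  obtain ⟨w⟩ := H.tree_isTree.isConnected.preconnected z x
  rcases stays w rfl with h | h
  · exact hzx h
  · exact hzy h


/-- A `16`-vertex `C₄`-free Halin graph whose characteristic tree has a longest path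
of length exactly `6` has exactly `24` edges. -/
theorem halin_sixteen_longest_six {V : Type*} [Fintype V]
    (hcard : Fintype.card V = 16) (H : HalinGraph V) (hfree : C4Free H.graph)
    (hex : ∃ (a b : V) (p : H.T.Walk a b), p.IsPath ∧ p.length = 6)
    (hmax : ∀ (a b : V) (p : H.T.Walk a b), p.IsPath → p.length ≤ 6) :
    eCount H.graph = 24 := by
  classical
  have hT : eCount H.T = 15 := by
    have h := H.tree_isTree.card_edgeFinset
    rw [hcard] at h
    rw [eCount_eq]
    omega
  have hpart := handshake_partition H.T H.nonleaf_degree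
  rw [hcard, hT] at hpart
  have h7 := seven_le H hfree hex hmax
  have hleaves : {x : V | IsLeaf H.T x}.ncard = 9 := by omega
  have hC : eCount H.C = 9 := by
    rw [cycle_ecount H.C H.two_regular, H.support_C, hleaves]
  have hdisj : Disjoint H.T.edgeSet H.C.edgeSet := by
    rw [Set.disjoint_left]
    intro e heT heC
    induction e using Sym2.ind with
    | _ x y =>
      rw [SimpleGraph.mem_edgeSet] at heT heC
      have hx : x ∈ H.C.support := ⟨y, heC⟩
      have hy : y ∈ H.C.support := ⟨x, heC.symm⟩
      rw [H.support_C] at hx hy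
      exact no_leaf_adj H hx hy heT
  have hunion : eCount H.graph = eCount H.T + eCount H.C := by
    rw [eCount, HalinGraph.graph, SimpleGraph.edgeSet_sup,
      Set.ncard_union_eq hdisj (Set.toFinite _) (Set.toFinite _)]
    rfl
  rw [hunion, hT, hC]
end

section
/- There is no 18-vertex C4-free Halin graph whose characteristic tree has a longest path of length exactly 4 or exactly 5. -/
open SimpleGraph

/-!
If the characteristic tree has diameter 4 with center `c`, or diameter 5 with central edge
`c c'`, then every vertex two steps away from the center is a leaf. So the non-leaves are the
centers `K` and their other neighbours, the fans, and every leaf hangs on a center or a fan.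
The leaves on one side of a tree edge are consecutive on the outer cycle, and two consecutive
leaves whose parents are distinct but adjacent close a `4`-cycle. Hence a fan carries exactly two
leaves (three consecutive ones would close a `4`-cycle through the fan), and a center carries
none (walking from one of its leaves along the arc of leaves on its side never reaches a leaf of
a fan, although the arc contains one). Counting gives `n = |K| + 3 · #fans`, so `n ≡ 1` or
`2 (mod 3)`, which rules out `n = 18`.
-/

namespace SimpleGraph

variable {V : Type*} {G : SimpleGraph V}

theorem Reachable.mem_of_adj_closed {X : Set V} (hX : ∀ a b, G.Adj a b → a ∈ X → b ∈ X)
    {u v : V} (h : G.Reachable u v) (hu : u ∈ X) : v ∈ X := by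
  rw [reachable_iff_reflTransGen] at h
  induction h with
  | refl => exact hu
  | tail _ hab ih => exact hX _ _ hab ih

theorem Preconnected.exists_adj_adj_of_ne (hG : G.Preconnected) {x y z : V}
    (hxy : x ≠ y) (hxz : x ≠ z) (hyz : y ≠ z) :
    ∃ a b c, G.Adj a b ∧ G.Adj a c ∧ b ≠ c := by
  by_contra! h
  have eq_or_adj (u v : V) : u = v ∨ G.Adj u v := by
    obtain ⟨p, hp⟩ := (hG u v).exists_isPath
    rcases p with _ | ⟨huw, _ | ⟨hwt, r⟩⟩
    · exact .inl rfl
    · exact .inr huw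
    · refine absurd (h _ _ _ huw.symm hwt) fun hu => ?_
      simp_all [Walk.cons_isPath_iff]
  exact hyz (h _ _ _ ((eq_or_adj x y).resolve_left hxy) ((eq_or_adj x z).resolve_left hxz))

theorem IsAcyclic.isPath_reverse_append (hG : G.IsAcyclic) {c a b : V} {p : G.Walk c a}
    {q : G.Walk c b} (hp : p.IsPath) (hq : q.IsPath) (hpq : p.snd ≠ q.snd) :
    (p.reverse.append q).IsPath := by
  rw [hG.isPath_iff_isChain] at hp hq ⊢
  rw [Walk.edges_append, Walk.edges_reverse, List.isChain_append, List.isChain_reverse]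
  refine ⟨hp.imp fun _ _ h => h.symm, hq, ?_⟩
  cases p <;> cases q <;> simp_all

theorem IsAcyclic.not_adj_of_adj_of_adj (hG : G.IsAcyclic) {a b c : V} (hab : G.Adj a b)
    (hbc : G.Adj b c) (hac : a ≠ c) : ¬G.Adj a c := fun hac' => by
  have hp : (Walk.cons hab (Walk.cons hbc .nil)).IsPath := by
    simp [hG.isPath_iff_isChain, hab.ne, hac]
  have := congrArg (·.1.length) <| (hG.subsingleton_path a c).elim ⟨_, hp⟩ (.singleton hac')
  simp at this

end SimpleGraph

theorem C4Free.false_of_square {V : Type*} {G : SimpleGraph V} (hG : C4Free G) {a b c d : V}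
    (hab : G.Adj a b) (hbc : G.Adj b c) (hcd : G.Adj c d) (hda : G.Adj d a) (hac : a ≠ c)
    (hbd : b ≠ d) : False := by
  refine hG a (.cons hab (.cons hbc (.cons hcd (.cons hda .nil)))) ?_ rfl
  have := hab.ne; have := hbc.ne; have := hcd.ne; have := hda.ne
  simp only [Walk.isCycle_def, Walk.isTrail_def, Walk.edges_cons, Walk.edges_nil,
    Walk.support_cons, Walk.support_nil, List.tail_cons, List.nodup_cons, List.mem_cons,
    List.not_mem_nil, Sym2.eq_iff]
  grind

section Leaves

variable {V : Type*} {T : SimpleGraph V}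

theorem IsLeaf.eq_of_adj_s19 {v a b : V} (hv : IsLeaf T v) (ha : T.Adj v a) (hb : T.Adj v b) :
    a = b := by
  obtain ⟨x, hx⟩ := Set.ncard_eq_one.mp hv
  have ha' : a ∈ T.neighborSet v := ha
  have hb' : b ∈ T.neighborSet v := hb
  rw [hx] at ha' hb'
  exact ha'.trans hb'.symm

theorem IsLeaf.exists_adj {v : V} (hv : IsLeaf T v) : ∃ w, T.Adj v w := by
  obtain ⟨x, hx⟩ := Set.ncard_eq_one.mp hv
  exact ⟨x, show x ∈ T.neighborSet v by simp [hx]⟩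

theorem isLeaf_of_forall_adj_eq {v w : V} (hvw : T.Adj v w) (h : ∀ u, T.Adj v u → u = w) :
    IsLeaf T v :=
  Set.ncard_eq_one.mpr ⟨w, Set.eq_singleton_iff_unique_mem.mpr ⟨hvw, h⟩⟩

theorem not_isLeaf_of_adj_of_adj {v a b : V} (ha : T.Adj v a) (hb : T.Adj v b) (hab : a ≠ b) :
    ¬IsLeaf T v :=
  fun hv => hab (hv.eq_of_adj_s19 ha hb)

end Leaves

section Branch

variable {V : Type*} {T : SimpleGraph V} {c : V} {X : Set V}

def branch (T : SimpleGraph V) (c : V) (X : Set V) : Set V :=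
  {v | v = c ∨ ∃ w ∉ X, T.Adj c w ∧ (v = w ∨ T.Adj w v)}

def FanCenter (T : SimpleGraph V) (c : V) (X : Set V) : Prop :=
  ∀ w ∉ X, T.Adj c w → ∀ u, T.Adj w u → u ≠ c → IsLeaf T u

theorem SimpleGraph.IsAcyclic.fanCenter_of_isPath (hT : T.IsAcyclic) {a : V}
    {p : T.Walk c a} (hp : p.IsPath)
    (hmax : ∀ x y (r : T.Walk x y), r.IsPath → r.length ≤ p.length + 2) :
    FanCenter T c {p.snd} := fun w hw hcw u hwu huc => by
  refine isLeaf_of_forall_adj_eq hwu.symm fun v huv => ?_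
  by_contra hvw
  have hq : (Walk.cons hcw (Walk.cons hwu (Walk.cons huv .nil))).IsPath := by
    simp [hT.isPath_iff_isChain, hcw.ne, hwu.ne, Ne.symm huc, Ne.symm hvw]
  have := hmax _ _ _ (hT.isPath_reverse_append hp hq (by simpa [eq_comm] using hw))
  simp at this

theorem self_mem_branch : c ∈ branch T c X := .inl rfl

theorem FanCenter.mem_branch_or_of_adj (hc : FanCenter T c X) {x y : V}
    (hx : x ∈ branch T c X) (hxy : T.Adj x y) : y ∈ branch T c X ∨ x = c ∧ y ∈ X := by
  by_cases hxc : x = c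
  · subst hxc
    by_cases hy : y ∈ X
    · exact .inr ⟨rfl, hy⟩
    · exact .inl (.inr ⟨y, hy, hxy, .inl rfl⟩)
  obtain _ | ⟨w, hw, hcw, rfl | hwx⟩ := hx
  · contradiction
  · exact .inl (.inr ⟨x, hw, hcw, .inr hxy⟩)
  · have hyw : y = w := (hc w hw hcw x hwx hxc).eq_of_adj_s19 hxy hwx.symm
    exact .inl (.inr ⟨w, hw, hcw, .inl hyw⟩)

theorem FanCenter.eq_or_adj_of_mem_branch (hc : FanCenter T c X) {v : V}
    (hv : v ∈ branch T c X) (hvl : ¬IsLeaf T v) : v = c ∨ T.Adj c v ∧ v ∉ X := by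
  obtain rfl | ⟨w, hw, hcw, rfl | hwv⟩ := hv
  · exact .inl rfl
  · exact .inr ⟨hcw, hw⟩
  · by_contra hvc
    exact hvl (hc w hw hcw v hwv fun h => hvc (.inl h))

theorem eq_or_adj_of_mem_branch_of_isLeaf {v q : V} (hv : v ∈ branch T c X)
    (hvl : IsLeaf T v) (hvq : T.Adj v q) : q = c ∨ T.Adj c q := by
  obtain rfl | ⟨w, -, hcw, rfl | hwv⟩ := hv
  · exact .inr hvq
  · exact .inl (hvl.eq_of_adj_s19 hvq hcw.symm)
  · exact .inr (hvl.eq_of_adj_s19 hvq hwv.symm ▸ hcw)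

theorem FanCenter.mem_branch_of_reachable_deleteEdges {c' v : V} (hc : FanCenter T c {c'})
    (hv : (T.deleteEdges {s(c, c')}).Reachable c v) : v ∈ branch T c {c'} := by
  refine hv.mem_of_adj_closed (fun a b hab ha => ?_) self_mem_branch
  rw [deleteEdges_adj, Set.mem_singleton_iff] at hab
  refine (hc.mem_branch_or_of_adj ha hab.1).resolve_right ?_
  rintro ⟨rfl, rfl⟩
  exact hab.2 rfl

theorem FanCenter.mem_branch (hc : FanCenter T c ∅) (hT : T.Connected) (v : V) :
    v ∈ branch T c ∅ :=
  (hT c v).mem_of_adj_closed (fun _ _ hab ha => (hc.mem_branch_or_of_adj ha hab).resolve_right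
    fun h => h.2) self_mem_branch

theorem FanCenter.mem_branch_or_mem_branch {c' : V} (hc : FanCenter T c {c'})
    (hc' : FanCenter T c' {c}) (hT : T.Connected) (v : V) :
    v ∈ branch T c {c'} ∨ v ∈ branch T c' {c} := by
  refine (hT c v).mem_of_adj_closed (X := branch T c {c'} ∪ branch T c' {c})
    (fun a b hab ha => ?_) (.inl self_mem_branch)
  rcases ha with ha | ha
  · rcases hc.mem_branch_or_of_adj ha hab with hb | ⟨-, rfl⟩
    · exact .inl hb
    · exact .inr self_mem_branch
  · rcases hc'.mem_branch_or_of_adj ha hab with hb | ⟨-, rfl⟩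
    · exact .inr hb
    · exact .inl self_mem_branch

theorem isLeaf_and_reachable_deleteEdges_iff {w x : V} (hwc : T.Adj w c)
    (hc : ¬IsLeaf T c) (hw : ¬IsLeaf T w) (hfan : ∀ u, T.Adj w u → u ≠ c → IsLeaf T u) :
    IsLeaf T x ∧ (T.deleteEdges {s(w, c)}).Reachable w x ↔ T.Adj w x ∧ IsLeaf T x := by
  have hwfan : FanCenter T w {c} := fun y hy hwy u hyu huw =>
    absurd ((hfan y hwy hy).eq_of_adj_s19 hyu hwy.symm) huw
  refine ⟨fun ⟨hx, hr⟩ => ?_, fun ⟨hwx, hx⟩ => ⟨hx, Adj.reachable ?_⟩⟩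
  · rcases hwfan.mem_branch_of_reachable_deleteEdges hr with rfl | ⟨y, hy, hwy, rfl | hyx⟩
    · exact absurd hx hw
    · exact ⟨hwy, hx⟩
    · exact absurd ((hfan y hwy hy).eq_of_adj_s19 hyx hwy.symm ▸ hx) hw
  · simp only [deleteEdges_adj, Set.mem_singleton_iff, Sym2.eq_iff]
    refine ⟨hwx, ?_⟩
    rintro (⟨-, rfl⟩ | ⟨rfl, -⟩)
    exacts [hc hx, hwc.ne rfl]

end Branch

namespace HalinGraph

variable {V : Type*} [Fintype V] (H : HalinGraph V)

theorem graph_adj_of_T {a b : V} (h : H.T.Adj a b) : H.graph.Adj a b := Or.inl h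

theorem graph_adj_of_C {a b : V} (h : H.C.Adj a b) : H.graph.Adj a b := Or.inr h

theorem not_isLeaf_of_adj_of_isLeaf {v w : V} (hv : IsLeaf H.T v) (hvw : H.T.Adj v w) :
    ¬IsLeaf H.T w := fun hw => by
  classical
  have hmem (x : V) : x ∈ ({v, w} : Finset V) := by
    have : x = v ∨ x = w :=
      (H.tree_isTree.connected v x).mem_of_adj_closed (X := {x | x = v ∨ x = w})
        (fun a b hab ha => by
          rcases ha with rfl | rfl
          · exact .inr (hv.eq_of_adj_s19 hab hvw)
          · exact .inl (hw.eq_of_adj_s19 hab hvw.symm)) (.inl rfl)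
    simpa using this
  have := (Finset.card_le_card (s := Finset.univ) fun x _ => hmem x).trans Finset.card_le_two
  have := H.four_le_card
  rw [Finset.card_univ] at *
  omega

variable {H}

theorem adj_of_arc_subset_branch (hfree : C4Free H.graph) {S X : Set V} {c a b : V}
    (hS : (H.C.induce S).Connected) (hSl : ∀ x ∈ S, IsLeaf H.T x) (hSb : S ⊆ branch H.T c X)
    (hc : ¬IsLeaf H.T c) (ha : a ∈ S) (hb : b ∈ S) (hca : H.T.Adj c a) : H.T.Adj c b := by
  refine (hS.preconnected ⟨a, ha⟩ ⟨b, hb⟩).mem_of_adj_closed (X := {x : S | H.T.Adj c x})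
    (fun x y hxy hx => ?_) hca
  have hyl := hSl y y.2
  obtain ⟨q, hyq⟩ := hyl.exists_adj
  rcases eq_or_adj_of_mem_branch_of_isLeaf (hSb y.2) hyl hyq with rfl | hcq
  · exact hyq.symm
  · have hxq : (x : V) ≠ q := by
      rintro rfl
      exact hc (hSl x x.2 |>.eq_of_adj hx.symm hyq.symm ▸ hyl)
    exact (hfree.false_of_square (H.graph_adj_of_T hx) (H.graph_adj_of_C hxy)
      (H.graph_adj_of_T hyq) (H.graph_adj_of_T hcq.symm) (fun h => hc (h ▸ hyl)) hxq).elim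

theorem ncard_leafNeighbors_eq_two (hfree : C4Free H.graph) {w c : V} (hwc : H.T.Adj w c)
    (hc : ¬IsLeaf H.T c) (hw : ¬IsLeaf H.T w)
    (hfan : ∀ u, H.T.Adj w u → u ≠ c → IsLeaf H.T u) :
    {u | H.T.Adj w u ∧ IsLeaf H.T u}.ncard = 2 := by
  set L := {u | H.T.Adj w u ∧ IsLeaf H.T u}
  have hside : {x | IsLeaf H.T x ∧ (H.T.deleteEdges {s(w, c)}).Reachable w x} = L :=
    Set.ext fun _ => isLeaf_and_reachable_deleteEdges_iff hwc hc hw hfan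
  have hle : L.ncard ≤ 2 := by
    have hconn : (H.C.induce L).Connected := hside ▸ H.planar w c hwc
    by_contra! h
    obtain ⟨x, y, z, hx, hy, hz, hxy, hxz, hyz⟩ := (Set.two_lt_ncard_iff (Set.toFinite _)).mp h
    obtain ⟨b, a, a', hba, hba', haa'⟩ := hconn.preconnected.exists_adj_adj_of_ne
      (x := ⟨x, hx⟩) (y := ⟨y, hy⟩) (z := ⟨z, hz⟩) (by simpa) (by simpa) (by simpa)
    exact hfree.false_of_square (H.graph_adj_of_T a.2.1) (H.graph_adj_of_C hba.symm)
      (H.graph_adj_of_C hba') (H.graph_adj_of_T a'.2.1.symm) (fun h => hw (h ▸ b.2.2))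
      (Subtype.coe_injective.ne haa')
  have hge : 3 ≤ L.ncard + 1 := calc
    3 ≤ (H.T.neighborSet w).ncard := H.nonleaf_degree w hw
    _ ≤ (insert c L).ncard := Set.ncard_le_ncard (fun u hu => by
        by_cases huc : u = c
        · exact .inl huc
        · exact .inr ⟨hu, hfan u hu huc⟩)
    _ ≤ L.ncard + 1 := Set.ncard_insert_le c L
  omega

theorem card_mod_three_of_fans (hfree : C4Free H.graph) (K : Finset V)
    (hK : ∀ c ∈ K, ¬IsLeaf H.T c ∧ ∀ a, H.T.Adj c a → ¬IsLeaf H.T a)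
    (hF : ∀ w, ¬IsLeaf H.T w → w ∉ K →
      ∃ c ∈ K, H.T.Adj w c ∧ ∀ u, H.T.Adj w u → u ≠ c → IsLeaf H.T u) :
    Fintype.card V % 3 = K.card % 3 := by
  classical
  set nonleaves := Finset.univ.filter fun v => ¬IsLeaf H.T v
  set leaves := Finset.univ.filter fun v => IsLeaf H.T v
  set leafNbrs := fun w => Finset.univ.filter fun u => H.T.Adj w u ∧ IsLeaf H.T u
  have hKsub : K ⊆ nonleaves := fun c hc => by simpa [nonleaves] using (hK c hc).1
  have htwo : ∀ w ∈ nonleaves \ K, (leafNbrs w).card = 2 := fun w hw => by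
    simp only [Finset.mem_sdiff, Finset.mem_filter, Finset.mem_univ, true_and,
      nonleaves] at hw
    obtain ⟨c, hcK, hwc, hfan⟩ := hF w hw.1 hw.2
    rw [← ncard_leafNeighbors_eq_two hfree hwc (hK c hcK).1 hw.1 hfan, ← Set.ncard_coe_finset]
    simp [leafNbrs]
  have hleaves : leaves = (nonleaves \ K).biUnion leafNbrs := by
    ext v
    simp only [Finset.mem_biUnion, Finset.mem_sdiff, Finset.mem_filter, Finset.mem_univ,
      true_and, leaves, nonleaves, leafNbrs]
    refine ⟨fun hv => ?_, fun ⟨_, _, _, hv⟩ => hv⟩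
    obtain ⟨w, hvw⟩ := hv.exists_adj
    exact ⟨w, ⟨H.not_isLeaf_of_adj_of_isLeaf hv hvw,
      fun hw => (hK w hw).2 v hvw.symm hv⟩, hvw.symm, hv⟩
  have hdisj : ((nonleaves \ K : Finset V) : Set V).PairwiseDisjoint leafNbrs := by
    intro w _ w' _ hww'
    refine Finset.disjoint_left.mpr fun v hv hv' => hww' ?_
    simp only [Finset.mem_filter, leafNbrs] at hv hv'
    exact hv.2.2.eq_of_adj_s19 hv.2.1.symm hv'.2.1.symm
  have hcard : Fintype.card V = nonleaves.card + leaves.card := by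
    rw [← Finset.card_univ, ← Finset.card_filter_add_card_filter_not
      (fun v => ¬IsLeaf H.T v)]
    simp [nonleaves, leaves]
  rw [hleaves, Finset.card_biUnion hdisj, Finset.sum_congr rfl htwo, Finset.sum_const,
    Finset.card_sdiff_of_subset hKsub, smul_eq_mul] at hcard
  have := Finset.card_le_card hKsub
  omega

theorem not_isLeaf_of_adj_of_fanCenter (hfree : C4Free H.graph) {x0 x1 c c' : V}
    (h01 : H.T.Adj x0 x1) (h1c : H.T.Adj x1 c) (hcc' : H.T.Adj c c') (h0c : x0 ≠ c)
    (h1c' : x1 ≠ c') (hc' : ¬IsLeaf H.T c') (hfan : FanCenter H.T c {c'}) :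
    ∀ a, H.T.Adj c a → ¬IsLeaf H.T a := fun a hca ha => by
  have hT := H.tree_isTree.isAcyclic
  have hc : ¬IsLeaf H.T c := not_isLeaf_of_adj_of_adj h1c.symm hcc' h1c'
  have hx0 : IsLeaf H.T x0 := hfan x1 h1c' h1c.symm x0 h01.symm h0c
  have hr0 : (H.T.deleteEdges {s(c, c')}).Reachable c x0 := by
    refine (Adj.reachable ?_).trans (Adj.reachable (u := x1) ?_)
    · simp [h1c.symm, h1c', hcc'.ne]
    · simp [h01.symm, h1c.ne, h1c']
  have hra : (H.T.deleteEdges {s(c, c')}).Reachable c a :=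
    Adj.reachable (by simp [hca, hcc'.ne, show a ≠ c' from fun h => hc' (h ▸ ha)])
  exact hT.not_adj_of_adj_of_adj h01 h1c h0c <| .symm <| adj_of_arc_subset_branch hfree
    (H.planar c c' hcc') (fun _ hx => hx.1)
    (fun _ hx => hfan.mem_branch_of_reachable_deleteEdges hx.2) hc ⟨ha, hra⟩ ⟨hx0, hr0⟩ hca

theorem card_mod_three_of_longest_path_four (hfree : C4Free H.graph) {x0 x4 : V}
    (p : H.T.Walk x0 x4) (hp : p.IsPath) (hlen : p.length = 4)
    (hmax : ∀ (a b : V) (q : H.T.Walk a b), q.IsPath → q.length ≤ 4) :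
    Fintype.card V % 3 = 1 := by
  have hT := H.tree_isTree.isAcyclic
  rcases p with _ | ⟨h01, _ | ⟨h12, _ | ⟨h23, _ | ⟨h34, _ | ⟨_, _⟩⟩⟩⟩⟩ <;> simp at hlen
  rename_i x1 x2 x3
  rw [hT.isPath_iff_isChain] at hp
  simp [h01.ne, h12.ne, h23.ne] at hp
  obtain ⟨h02, h13, h24⟩ := hp
  have hA : (Walk.cons h12.symm (Walk.cons h01.symm .nil)).IsPath := by
    simp [hT.isPath_iff_isChain, h12.ne', Ne.symm h02]
  have hB : (Walk.cons h23 (Walk.cons h34 .nil)).IsPath := by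
    simp [hT.isPath_iff_isChain, h23.ne, h24]
  have hfan1 : FanCenter H.T x2 {x1} := hT.fanCenter_of_isPath hA hmax
  have hfan3 : FanCenter H.T x2 {x3} := hT.fanCenter_of_isPath hB hmax
  have hfan : FanCenter H.T x2 ∅ := fun w _ => by
    by_cases hw : w = x1
    exacts [hfan3 w (fun h => h13 (hw ▸ h)), hfan1 w hw]
  have hc : ¬IsLeaf H.T x2 := not_isLeaf_of_adj_of_adj h12.symm h23 h13
  have hnoleaf := not_isLeaf_of_adj_of_fanCenter hfree h01 h12 h23 h02 h13
    (not_isLeaf_of_adj_of_adj h23.symm h34 h24) hfan3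
  refine H.card_mod_three_of_fans hfree {x2} (by simpa using ⟨hc, hnoleaf⟩) fun w hw hwK => ?_
  obtain rfl | ⟨hcw, -⟩ := hfan.eq_or_adj_of_mem_branch
    (hfan.mem_branch H.tree_isTree.connected w) hw
  · simp at hwK
  · exact ⟨x2, by simp, hcw.symm, hfan w (by simp) hcw⟩

theorem card_mod_three_of_longest_path_five (hfree : C4Free H.graph) {x0 x5 : V}
    (p : H.T.Walk x0 x5) (hp : p.IsPath) (hlen : p.length = 5)
    (hmax : ∀ (a b : V) (q : H.T.Walk a b), q.IsPath → q.length ≤ 5) :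
    Fintype.card V % 3 = 2 := by
  classical
  have hT := H.tree_isTree.isAcyclic
  rcases p with _ | ⟨h01, _ | ⟨h12, _ | ⟨h23, _ | ⟨h34, _ | ⟨h45, _ | ⟨_, _⟩⟩⟩⟩⟩⟩ <;>
    simp at hlen
  rename_i x1 x2 x3 x4
  rw [hT.isPath_iff_isChain] at hp
  simp [h01.ne, h12.ne, h23.ne, h34.ne] at hp
  obtain ⟨h02, h13, h24, h35⟩ := hp
  have hfan2 : FanCenter H.T x2 {x3} := hT.fanCenter_of_isPath (p := .cons h23 (.cons h34
    (.cons h45 .nil))) (by simp [hT.isPath_iff_isChain, h23.ne, h34.ne, h24, h35]) hmax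
  have hfan3 : FanCenter H.T x3 {x2} := hT.fanCenter_of_isPath (p := .cons h23.symm
    (.cons h12.symm (.cons h01.symm .nil))) (by simp [hT.isPath_iff_isChain, h23.ne', h12.ne',
      Ne.symm h13, Ne.symm h02]) hmax
  have hnl2 : ¬IsLeaf H.T x2 := not_isLeaf_of_adj_of_adj h12.symm h23 h13
  have hnl3 : ¬IsLeaf H.T x3 := not_isLeaf_of_adj_of_adj h23.symm h34 h24
  have hno2 := not_isLeaf_of_adj_of_fanCenter hfree h01 h12 h23 h02 h13 hnl3 hfan2
  have hno3 := not_isLeaf_of_adj_of_fanCenter hfree h45.symm h34.symm h23.symm (Ne.symm h35)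
    (Ne.symm h24) hnl2 hfan3
  have hK : ({x2, x3} : Finset V).card = 2 := Finset.card_pair h23.ne
  refine (H.card_mod_three_of_fans hfree {x2, x3} (by simpa using ⟨⟨hnl2, hno2⟩, hnl3, hno3⟩)
    fun w hw hwK => ?_).trans (by rw [hK])
  rcases hfan2.mem_branch_or_mem_branch hfan3 H.tree_isTree.connected w with hw' | hw'
  · obtain rfl | ⟨hcw, hw3⟩ := hfan2.eq_or_adj_of_mem_branch hw' hw
    · simp at hwK
    · exact ⟨x2, by simp, hcw.symm, hfan2 w hw3 hcw⟩
  · obtain rfl | ⟨hcw, hw2⟩ := hfan3.eq_or_adj_of_mem_branch hw' hw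
    · simp at hwK
    · exact ⟨x3, by simp, hcw.symm, hfan3 w hw2 hcw⟩

end HalinGraph

/-- There is no `18`-vertex `C₄`-free Halin graph whose characteristic tree has a
longest path of length exactly `4` or exactly `5`. -/
theorem halin_eighteen_no_longest_four_or_five {V : Type*} [Fintype V]
    (hcard : Fintype.card V = 18) (H : HalinGraph V) (hfree : C4Free H.graph) :
    ¬ ((∃ (a b : V) (p : H.T.Walk a b), p.IsPath ∧ p.length = 4) ∧
        ∀ (a b : V) (p : H.T.Walk a b), p.IsPath → p.length ≤ 4) ∧
    ¬ ((∃ (a b : V) (p : H.T.Walk a b), p.IsPath ∧ p.length = 5) ∧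
        ∀ (a b : V) (p : H.T.Walk a b), p.IsPath → p.length ≤ 5) := by
  constructor
  · rintro ⟨⟨a, b, p, hp, hlen⟩, hmax⟩
    have := H.card_mod_three_of_longest_path_four hfree p hp hlen hmax
    omega
  · rintro ⟨⟨a, b, p, hp, hlen⟩, hmax⟩
    have := H.card_mod_three_of_longest_path_five hfree p hp hlen hmax
    omega
end
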